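/- arXiv:2408.04067 — 6 statements merged into one kernel-verified Lean document; each statement's English description precedes it below -/
import Mathlib

section
/- For every integer t ≥ 4, R_t(3) ≥ 169·3^{t−4} + 1: for every t ≥ 4 there exists a t-edge-colored tournament on 169·3^{t−4} vertices containing no monochromatic transitive subtournament of order 3. -/
/-- A "good" `n`-vertex tournament colored with colors in `[lo, hi]` and
no monochromatic transitive triangle. -/
def GoodCol (n lo hi : ℕ) : Prop :=
  ∃ (r : Fin n → Fin n → Prop) (c : Fin n → Fin n → ℕ),
    (∀ v, ¬ r v v) ∧
    (∀ u v, u ≠ v → (r u v ↔ ¬ r v u)) ∧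
    (∀ u v, r u v → lo ≤ c u v ∧ c u v ≤ hi) ∧
    (∀ x y z, r x y → r y z → r x z → ¬(c x y = c y z ∧ c x y = c x z))

def r3 (x y : Fin 3) : Prop := (y.val + 3 - x.val) % 3 = 1

instance : ∀ x y, Decidable (r3 x y) := fun x y => by unfold r3; infer_instance

def q13 (x y : Fin 13) : ℕ := (y.val + 13 - x.val) % 13

def r13 (x y : Fin 13) : Prop :=
  q13 x y = 1 ∨ q13 x y = 2 ∨ q13 x y = 3 ∨ q13 x y = 5 ∨ q13 x y = 6 ∨ q13 x y = 9

instance : ∀ x y, Decidable (r13 x y) := fun x y => by unfold r13; infer_instance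

def e13 (x y : Fin 13) : ℕ :=
  if q13 x y = 1 ∨ q13 x y = 3 ∨ q13 x y = 9 then 0 else 1

lemma base3 (m : ℕ) : GoodCol 3 m m := by
  refine ⟨r3, fun _ _ => m, ?_, ?_, fun u v _ => ⟨le_refl m, le_refl m⟩, ?_⟩
  · decide
  · decide
  · have key : ∀ x y z : Fin 3, r3 x y → r3 y z → r3 x z → False := by decide
    intro x y z h1 h2 h3 _
    exact key x y z h1 h2 h3

lemma base13 (m : ℕ) : GoodCol 13 m (m + 1) := by
  refine ⟨r13, fun u v => m + e13 u v, ?_, ?_, ?_, ?_⟩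
  · decide
  · decide
  · intro u v _
    have h : e13 u v ≤ 1 := by unfold e13; split <;> omega
    exact ⟨Nat.le_add_right _ _, by show m + e13 u v ≤ m + 1; omega⟩
  · have key : ∀ x y z : Fin 13, r13 x y → r13 y z → r13 x z →
        ¬(e13 x y = e13 y z ∧ e13 x y = e13 x z) := by decide
    intro x y z h1 h2 h3 he
    exact key x y z h1 h2 h3 ⟨Nat.add_left_cancel he.1, Nat.add_left_cancel he.2⟩

def pR {a b : ℕ} (ha : 0 < a) (r1 : Fin a → Fin a → Prop) (r2 : Fin b → Fin b → Prop)
    (u v : Fin (a * b)) : Prop :=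
  if u.val / a = v.val / a then
    r1 ⟨u.val % a, Nat.mod_lt _ ha⟩ ⟨v.val % a, Nat.mod_lt _ ha⟩
  else
    r2 ⟨u.val / a, Nat.div_lt_of_lt_mul u.isLt⟩ ⟨v.val / a, Nat.div_lt_of_lt_mul v.isLt⟩

def pC {a b : ℕ} (ha : 0 < a) (c1 : Fin a → Fin a → ℕ) (c2 : Fin b → Fin b → ℕ)
    (u v : Fin (a * b)) : ℕ :=
  if u.val / a = v.val / a then
    c1 ⟨u.val % a, Nat.mod_lt _ ha⟩ ⟨v.val % a, Nat.mod_lt _ ha⟩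
  else
    c2 ⟨u.val / a, Nat.div_lt_of_lt_mul u.isLt⟩ ⟨v.val / a, Nat.div_lt_of_lt_mul v.isLt⟩

lemma prodGood {a b lo1 hi1 lo2 hi2 : ℕ} (ha : 0 < a)
    (hle1 : lo1 ≤ hi1) (h12 : hi1 < lo2) (hle2 : lo2 ≤ hi2)
    (h1 : GoodCol a lo1 hi1) (h2 : GoodCol b lo2 hi2) :
    GoodCol (a * b) lo1 hi2 := by
  obtain ⟨r1, c1, irr1, tot1, col1, nm1⟩ := h1
  obtain ⟨r2, c2, irr2, tot2, col2, nm2⟩ := h2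
  refine ⟨pR ha r1 r2, pC ha c1 c2, ?_, ?_, ?_, ?_⟩
  · intro v
    unfold pR
    rw [if_pos rfl]
    exact irr1 _
  · intro u v huv
    unfold pR
    by_cases h : u.val / a = v.val / a
    · have hm : u.val % a ≠ v.val % a := by
        intro he
        apply huv
        have e1 := Nat.div_add_mod u.val a
        have e2 := Nat.div_add_mod v.val a
        have e3 : a * (u.val / a) = a * (v.val / a) := by rw [h]
        exact Fin.ext (by omega)
      rw [if_pos h, if_pos h.symm]
      exact tot1 _ _ (fun he => hm (congrArg Fin.val he))
    · rw [if_neg h, if_neg (Ne.symm h)]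
      exact tot2 _ _ (fun he => h (congrArg Fin.val he))
  · intro u v hr
    unfold pR at hr
    unfold pC
    by_cases h : u.val / a = v.val / a
    · rw [if_pos h] at hr ⊢
      have := col1 _ _ hr; omega
    · rw [if_neg h] at hr ⊢
      have := col2 _ _ hr; omega
  · intro x y z hxy hyz hxz
    unfold pR at hxy hyz hxz
    unfold pC
    by_cases hxy' : x.val / a = y.val / a <;> by_cases hyz' : y.val / a = z.val / a
    · have hxz' : x.val / a = z.val / a := hxy'.trans hyz'
      rw [if_pos hxy'] at hxy
      rw [if_pos hyz'] at hyz
      rw [if_pos hxz'] at hxz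
      rw [if_pos hxy', if_pos hyz', if_pos hxz']
      exact nm1 _ _ _ hxy hyz hxz
    · have hxz' : ¬ x.val / a = z.val / a := fun h => hyz' (hxy'.symm.trans h)
      rw [if_pos hxy'] at hxy
      rw [if_neg hyz'] at hyz
      rw [if_pos hxy', if_neg hyz']
      have b1 := col1 _ _ hxy
      have b2 := col2 _ _ hyz
      intro he
      omega
    · have hxz' : ¬ x.val / a = z.val / a := fun h => hxy' (h.trans hyz'.symm)
      rw [if_neg hxy'] at hxy
      rw [if_pos hyz'] at hyz
      rw [if_neg hxy', if_pos hyz']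
      have b1 := col2 _ _ hxy
      have b2 := col1 _ _ hyz
      intro he
      omega
    · by_cases hxz' : x.val / a = z.val / a
      · rw [if_neg hxy'] at hxy
        rw [if_pos hxz'] at hxz
        rw [if_neg hxy', if_neg hyz', if_pos hxz']
        have b1 := col2 _ _ hxy
        have b2 := col1 _ _ hxz
        intro he
        omega
      · rw [if_neg hxy'] at hxy
        rw [if_neg hyz'] at hyz
        rw [if_neg hxz'] at hxz
        rw [if_neg hxy', if_neg hyz', if_neg hxz']
        exact nm2 _ _ _ hxy hyz hxz

lemma mainGood (k : ℕ) : GoodCol (169 * 3 ^ k) 1 (4 + k) := by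
  induction k with
  | zero =>
    have h169 : (169 : ℕ) * 3 ^ 0 = 13 * 13 := by norm_num
    rw [h169]
    exact prodGood (by norm_num) (by norm_num) (by norm_num) (by norm_num) (base13 1) (base13 3)
  | succ k ih =>
    have hn : (169 : ℕ) * 3 ^ (k + 1) = (169 * 3 ^ k) * 3 := by ring
    rw [hn]
    have h := prodGood (a := 169 * 3 ^ k) (b := 3) (by positivity)
      (by omega) (show 4 + k < 5 + k by omega) (le_refl _) ih (base3 (5 + k))
    have : 4 + (k + 1) = 5 + k := by omega
    rw [this]
    exact h

/-- For every integer `t ≥ 4`, `R_t(3) ≥ 169 * 3 ^ (t - 4) + 1`: there exists a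
`t`-edge-colored tournament on `169 * 3 ^ (t - 4)` vertices containing no monochromatic
transitive subtournament of order 3. -/
theorem stmt_10 :
    ∀ t : ℕ, 4 ≤ t →
      ∃ (r : Fin (169 * 3 ^ (t - 4)) → Fin (169 * 3 ^ (t - 4)) → Prop)
        (c : Fin (169 * 3 ^ (t - 4)) → Fin (169 * 3 ^ (t - 4)) → ℕ),
        (∀ v, ¬ r v v) ∧
        (∀ u v : Fin (169 * 3 ^ (t - 4)), u ≠ v → (r u v ↔ ¬ r v u)) ∧
        (∀ u v, r u v → 1 ≤ c u v ∧ c u v ≤ t) ∧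
        ¬ ∃ (s : Finset (Fin (169 * 3 ^ (t - 4)))) (col : ℕ),
            s.card = 3 ∧
            (∀ a ∈ s, ∀ b ∈ s, r a b → c a b = col) ∧
            (∀ a ∈ s, ∀ b ∈ s, ∀ d ∈ s, r a b → r b d → r a d) := by
  intro t ht
  obtain ⟨r, c, irr, tot, colb, nm⟩ := mainGood (t - 4)
  refine ⟨r, c, irr, tot, fun u v hr => by have := colb u v hr; omega, ?_⟩
  rintro ⟨s, col, hcard, hmono, htr⟩
  obtain ⟨x, y, z, hxy, hxz, hyz, rfl⟩ := Finset.card_eq_three.mp hcard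
  have hx : x ∈ ({x, y, z} : Finset _) := by simp
  have hy : y ∈ ({x, y, z} : Finset _) := by simp
  have hz : z ∈ ({x, y, z} : Finset _) := by simp
  have tot' : ∀ u v : Fin (169 * 3 ^ (t - 4)), u ≠ v → r u v ∨ r v u := by
    intro u v h
    by_cases hr : r u v
    · exact Or.inl hr
    · exact Or.inr ((tot v u h.symm).mpr hr)
  have chain : ∃ p q w, p ∈ ({x, y, z} : Finset _) ∧ q ∈ ({x, y, z} : Finset _) ∧
      w ∈ ({x, y, z} : Finset _) ∧ r p q ∧ r q w ∧ r p w := by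
    rcases tot' x y hxy with h1 | h1 <;> rcases tot' y z hyz with h2 | h2 <;>
      rcases tot' x z hxz with h3 | h3
    · exact ⟨x, y, z, hx, hy, hz, h1, h2, h3⟩
    · exact absurd h3 ((tot x z hxz).mp (htr x hx y hy z hz h1 h2))
    · exact ⟨x, z, y, hx, hz, hy, h3, h2, h1⟩
    · exact ⟨z, x, y, hz, hx, hy, h3, h1, h2⟩
    · exact ⟨y, x, z, hy, hx, hz, h1, h3, h2⟩
    · exact ⟨y, z, x, hy, hz, hx, h2, h3, h1⟩
    · exact absurd h1 ((tot x y hxy).mp (htr x hx z hz y hy h3 h2))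
    · exact ⟨z, y, x, hz, hy, hx, h2, h1, h3⟩
  obtain ⟨p, q, w, hp, hq, hw, rpq, rqw, rpw⟩ := chain
  exact nm p q w rpq rqw rpw
    ⟨(hmono p hp q hq rpq).trans (hmono q hq w hw rqw).symm,
     (hmono p hp q hq rpq).trans (hmono p hp w hw rpw).symm⟩
end

section
/- For every integer t ≥ 2, R_t(6) ≥ 829·27^{t−2} + 1: for every t ≥ 2 there exists a t-edge-colored tournament on 829·27^{t−2} vertices containing no monochromatic transitive subtournament of order 6. -/
/-!
In the lexicographic product of a `k`-colored tournament with an `l`-colored one, where the arcs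
inside a block keep their colors shifted by `k`, a monochromatic chain of an old color meets every
block at most once and a chain of a new color stays inside one block; so the product inherits
freedom from monochromatic transitive subtournaments of order 6 from its factors. Starting from
the 2-colored tournament on `𝔽₈₂₉` whose arcs follow the quartic residue classes `C₀ ∪ C₁`
(colored by the class), and multiplying `t - 2` times by the Paley tournament on `𝔽₂₇`, gives the
bound. Both base cases are finite checks made small by symmetry: an affine map `x ↦ m (x - u)`
moves the first arc of a chain to a normal form, and the kernel searches the remaining chains.
-/

open Finset

structure ColoredTournament (V : Type*) (t : ℕ) where
  Adj : V → V → Prop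
  color : V → V → ℕ
  irrefl : ∀ v, ¬ Adj v v
  adj_iff_not_adj : ∀ u v, u ≠ v → (Adj u v ↔ ¬ Adj v u)
  color_mem : ∀ u v, Adj u v → 1 ≤ color u v ∧ color u v ≤ t

namespace ColoredTournament

variable {V W : Type*} {t : ℕ}

section Chains

variable (T : ColoredTournament V t)

def IsMonoChain {n : ℕ} (f : Fin n → V) (col : ℕ) : Prop :=
  ∀ i j, i < j → T.Adj (f i) (f j) ∧ T.color (f i) (f j) = col

def MonoChainFree (n : ℕ) : Prop :=
  ∀ (f : Fin n → V) (col : ℕ), ¬ T.IsMonoChain f col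

def IsEndomorphism (φ : V → V) : Prop :=
  ∀ a b, T.Adj a b → T.Adj (φ a) (φ b) ∧ T.color (φ a) (φ b) = T.color a b

variable {T}

theorem IsMonoChain.comp {n : ℕ} {f : Fin n → V} {col : ℕ} (hf : T.IsMonoChain f col)
    {φ : V → V} (hφ : T.IsEndomorphism φ) : T.IsMonoChain (φ ∘ f) col := fun i j hij =>
  let ⟨hadj, hcol⟩ := hf i j hij
  ⟨(hφ _ _ hadj).1, (hφ _ _ hadj).2.trans hcol⟩

theorem exists_isMonoChain_of_transitive {n col : ℕ} {s : Finset V} (hs : s.card = n)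
    (hcol : ∀ a ∈ s, ∀ b ∈ s, T.Adj a b → T.color a b = col)
    (htrans : ∀ a ∈ s, ∀ b ∈ s, ∀ d ∈ s, T.Adj a b → T.Adj b d → T.Adj a d) :
    ∃ f : Fin n → V, T.IsMonoChain f col := by
  classical
  let r : s → s → Prop := fun a b => T.Adj a b
  have : IsStrictTotalOrder s r :=
    { irrefl := fun a => T.irrefl a
      trans := fun a b d => htrans a a.2 b b.2 d d.2
      trichotomous := fun a b hab hba => by
        by_contra hne
        exact hba ((T.adj_iff_not_adj b a fun h => hne (Subtype.ext h).symm).2 hab) }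
  let : LinearOrder s := linearOrderOfSTO r
  let e := monoEquivOfFin s (by simpa using hs)
  refine ⟨fun i => e i, fun i j hij => ?_⟩
  have hadj : T.Adj (e i) (e j) := e.strictMono hij
  exact ⟨hadj, hcol _ (e i).2 _ (e j).2 hadj⟩

theorem MonoChainFree.not_exists_transitive {n : ℕ} (hT : T.MonoChainFree n) :
    ¬ ∃ (s : Finset V) (col : ℕ), s.card = n ∧
      (∀ a ∈ s, ∀ b ∈ s, T.Adj a b → T.color a b = col) ∧
      (∀ a ∈ s, ∀ b ∈ s, ∀ d ∈ s, T.Adj a b → T.Adj b d → T.Adj a d) := by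
  rintro ⟨s, col, hs, hcol, htrans⟩
  obtain ⟨f, hf⟩ := exists_isMonoChain_of_transitive hs hcol htrans
  exact hT f col hf

theorem monoChainFree_of_normalize {n : ℕ} (P : V → V → Prop)
    (hnorm : ∀ u v, T.Adj u v → ∃ φ, T.IsEndomorphism φ ∧ P (φ u) (φ v))
    (hP : ∀ (f : Fin (n + 2) → V) (col : ℕ), T.IsMonoChain f col → ¬ P (f 0) (f 1)) :
    T.MonoChainFree (n + 2) := by
  intro f col hf
  obtain ⟨φ, hφ, hP01⟩ := hnorm _ _ (hf 0 1 (by simp)).1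
  exact hP _ col (hf.comp hφ) hP01

end Chains

section Constructions

def comap (T : ColoredTournament V t) (e : W ↪ V) : ColoredTournament W t where
  Adj a b := T.Adj (e a) (e b)
  color a b := T.color (e a) (e b)
  irrefl a := T.irrefl (e a)
  adj_iff_not_adj _ _ hab := T.adj_iff_not_adj _ _ (e.injective.ne hab)
  color_mem a b := T.color_mem (e a) (e b)

theorem MonoChainFree.comap {T : ColoredTournament V t} {n : ℕ} (hT : T.MonoChainFree n)
    (e : W ↪ V) : (T.comap e).MonoChainFree n :=
  fun f col hf => hT (e ∘ f) col hf

@[simps]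
def lexProd [DecidableEq V] {k l : ℕ} (T : ColoredTournament V k) (S : ColoredTournament W l) :
    ColoredTournament (V × W) (k + l) where
  Adj p q := if p.1 = q.1 then S.Adj p.2 q.2 else T.Adj p.1 q.1
  color p q := if p.1 = q.1 then k + S.color p.2 q.2 else T.color p.1 q.1
  irrefl p := by simpa using S.irrefl p.2
  adj_iff_not_adj p q hpq := by
    by_cases h : p.1 = q.1
    · simp only [h, if_true]
      exact S.adj_iff_not_adj _ _ fun h' => hpq (Prod.ext h h')
    · simp only [h, Ne.symm h, if_false]
      exact T.adj_iff_not_adj _ _ h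
  color_mem p q := by
    by_cases h : p.1 = q.1
    · simp only [h, if_true]
      intro hS
      have := S.color_mem _ _ hS
      omega
    · simp only [h, if_false]
      intro hT
      have := T.color_mem _ _ hT
      omega

theorem MonoChainFree.lexProd [DecidableEq V] {k l n : ℕ} {T : ColoredTournament V k}
    {S : ColoredTournament W l} (hT : T.MonoChainFree n) (hS : S.MonoChainFree n) :
    (T.lexProd S).MonoChainFree n := by
  intro f col hf
  by_cases hcol : col ≤ k
  · refine hT (Prod.fst ∘ f) col fun i j hij => ?_
    obtain ⟨hadj, hc⟩ := hf i j hij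
    have hne : (f i).1 ≠ (f j).1 := fun h => by
      rw [lexProd_Adj, if_pos h] at hadj
      rw [lexProd_color, if_pos h] at hc
      have := S.color_mem _ _ hadj
      omega
    rw [lexProd_Adj, if_neg hne] at hadj
    rw [lexProd_color, if_neg hne] at hc
    exact ⟨hadj, hc⟩
  · refine hS (Prod.snd ∘ f) (col - k) fun i j hij => ?_
    obtain ⟨hadj, hc⟩ := hf i j hij
    have heq : (f i).1 = (f j).1 := by
      by_contra h
      rw [lexProd_Adj, if_neg h] at hadj
      rw [lexProd_color, if_neg h] at hc
      have := T.color_mem _ _ hadj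
      omega
    rw [lexProd_Adj, if_pos heq] at hadj
    rw [lexProd_color, if_pos heq] at hc
    exact ⟨hadj, by simp only [Function.comp_apply]; omega⟩

end Constructions

section Cayley

variable {G : Type*} [AddGroup G] (t : ℕ) (D : G → Prop) (κ : G → ℕ) (hD0 : ¬ D 0)
  (hD : ∀ d, d ≠ 0 → (D d ↔ ¬ D (-d))) (hκ : ∀ d, D d → 1 ≤ κ d ∧ κ d ≤ t)

def cayley : ColoredTournament G t where
  Adj u v := D (v - u)
  color u v := κ (v - u)
  irrefl v := by simpa using hD0
  adj_iff_not_adj u v huv := by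
    rw [← neg_sub v u]
    exact hD _ (sub_ne_zero.2 huv.symm)
  color_mem u v := hκ (v - u)

variable {t D κ} in
theorem isEndomorphism_cayley {φ ψ : G → G} (hφ : ∀ a b, φ b - φ a = ψ (b - a))
    (hψ : ∀ d, D d → D (ψ d) ∧ κ (ψ d) = κ d) :
    (cayley t D κ hD0 hD hκ).IsEndomorphism φ := fun a b hab => by
  change D (φ b - φ a) ∧ κ (φ b - φ a) = κ (b - a)
  rw [hφ]
  exact hψ _ hab

end Cayley

end ColoredTournament

def hasChain {V : Type*} (r : V → V → Prop) [DecidableRel r] : ℕ → Finset V → Bool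
  | 0, _ => true
  | n + 1, s => decide (∃ x ∈ s, hasChain r n (s.filter (r x)) = true)

theorem hasChain_eq_true {V : Type*} {r : V → V → Prop} [DecidableRel r] {n : ℕ}
    {s : Finset V} {f : Fin n → V} (hs : ∀ i, f i ∈ s) (hf : ∀ i j, i < j → r (f i) (f j)) :
    hasChain r n s = true := by
  induction n generalizing s with
  | zero => rfl
  | succ n ih =>
    rw [hasChain, decide_eq_true_eq]
    refine ⟨f 0, hs 0, ih (f := fun i => f i.succ) (fun i => ?_) fun i j hij => ?_⟩
    · exact mem_filter.2 ⟨hs _, hf _ _ i.succ_pos⟩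
    · exact hf _ _ (Fin.succ_lt_succ_iff.2 hij)

namespace Quartic829

open ColoredTournament

instance : Fact (Nat.Prime 829) := ⟨by norm_num⟩

/-- The quartic residue character `x ↦ x ^ 207` (`829 = 4 * 207 + 1`), computed through `ℕ` so
that kernel evaluation uses its built-in natural-number arithmetic instead of unary powers in
`ZMod 829`. -/
def quarticChar (x : ZMod 829) : ZMod 829 := ((x.val ^ 207 : ℕ) : ZMod 829)

theorem quarticChar_eq_pow (x : ZMod 829) : quarticChar x = x ^ 207 := by
  rw [quarticChar, Nat.cast_pow, ZMod.natCast_zmod_val]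

theorem quarticChar_mul (x y : ZMod 829) : quarticChar (x * y) = quarticChar x * quarticChar y := by
  simp only [quarticChar_eq_pow, mul_pow]

theorem quarticChar_neg (x : ZMod 829) : quarticChar (-x) = -quarticChar x := by
  simp only [quarticChar_eq_pow, (by decide : Odd 207).neg_pow]

theorem quarticChar_inv (x : ZMod 829) : quarticChar x⁻¹ = (quarticChar x)⁻¹ := by
  simp only [quarticChar_eq_pow, inv_pow]

/-- A primitive fourth root of unity, as `2` is a quadratic non-residue modulo `829`. -/
def ω : ZMod 829 := quarticChar 2

theorem ω_sq : ω ^ 2 = -1 := by decide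

theorem quarticChar_cases {x : ZMod 829} (hx : x ≠ 0) :
    quarticChar x = 1 ∨ quarticChar x = -1 ∨ quarticChar x = ω ∨ quarticChar x = -ω := by
  have hy : quarticChar x ^ 4 = 1 := by
    rw [quarticChar_eq_pow, ← pow_mul]
    exact ZMod.pow_card_sub_one_eq_one hx
  generalize quarticChar x = y at hy ⊢
  have : (y - 1) * (y + 1) * ((y - ω) * (y + ω)) = 0 := by
    linear_combination hy + (1 - y ^ 2) * ω_sq
  simp only [mul_eq_zero, sub_eq_zero, add_eq_zero_iff_eq_neg] at this
  tauto

/-- Arcs `u → v` with `v - u ∈ C₀ ∪ C₁ = {d | d ^ 207 ∈ {1, ω}}`, colored `1` on `C₀` and `2` on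
`C₁`; it is a tournament because `-1 ∈ C₂`. -/
def quarticTournament : ColoredTournament (ZMod 829) 2 :=
  cayley 2 (fun d => quarticChar d = 1 ∨ quarticChar d = ω)
    (fun d => if quarticChar d = 1 then 1 else 2) (by decide)
    (fun d hd => by
      rcases quarticChar_cases hd with h | h | h | h <;>
        simp only [quarticChar_neg, h, neg_neg] <;> decide)
    (fun d _ => by split <;> omega)

theorem quarticChar_eq_of_isMonoChain {n col : ℕ} {f : Fin n → ZMod 829}
    (hf : quarticTournament.IsMonoChain f col) {i j k l : Fin n} (hij : i < j) (hkl : k < l) :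
    quarticChar (f j - f i) = quarticChar (f l - f k) := by
  obtain ⟨hadj, hc⟩ := hf i j hij
  obtain ⟨hadj', hc'⟩ := hf k l hkl
  have hω : ω ≠ 1 := by decide
  change quarticChar (f j - f i) = 1 ∨ quarticChar (f j - f i) = ω at hadj
  change quarticChar (f l - f k) = 1 ∨ quarticChar (f l - f k) = ω at hadj'
  change (if quarticChar (f j - f i) = 1 then 1 else 2) = col at hc
  change (if quarticChar (f l - f k) = 1 then 1 else 2) = col at hc'
  rcases hadj with h | h <;> rcases hadj' with h' | h' <;> simp [h, h', hω] at hc hc' ⊢ <;> omega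

theorem quarticTournament_normalize (u v : ZMod 829) (huv : quarticTournament.Adj u v) :
    ∃ φ, quarticTournament.IsEndomorphism φ ∧ φ u = 0 ∧ (φ v = 1 ∨ φ v = 2) := by
  change quarticChar (v - u) = 1 ∨ quarticChar (v - u) = ω at huv
  set d := v - u with hd
  have hd0 : quarticChar d ≠ 0 := by rcases huv with h | h <;> rw [h] <;> decide
  obtain ⟨r, hr, hχr⟩ : ∃ r : ZMod 829, (r = 1 ∨ r = 2) ∧ quarticChar r = quarticChar d := by
    rcases huv with h | h
    · exact ⟨1, .inl rfl, by rw [h]; decide⟩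
    · exact ⟨2, .inr rfl, h.symm⟩
  -- `m` is a quartic residue, so `x ↦ m (x - u)` preserves arcs and colors
  set m := r * d⁻¹
  have hm : quarticChar m = 1 := by
    rw [quarticChar_mul, quarticChar_inv, hχr, mul_inv_cancel₀ hd0]
  refine ⟨fun x => m * (x - u), isEndomorphism_cayley _ _ _ (ψ := (m * ·)) (fun a b => by ring)
    fun e he => ?_, by simp, ?_⟩
  · simpa only [quarticChar_mul, hm, one_mul, and_true] using he
  · have : d ≠ 0 := fun h => hd0 (by rw [h]; decide)
    simp [m, ← hd, this, hr]

theorem hasChain_quarticChar_eq_false (r : ZMod 829) (hr : r = 1 ∨ r = 2) :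
    hasChain (fun x y => quarticChar (y - x) = quarticChar r) 4
      (univ.filter fun x => quarticChar (x - 0) = quarticChar r ∧
        quarticChar (x - r) = quarticChar r) = false := by
  rcases hr with rfl | rfl <;> decide +kernel

theorem quarticTournament_monoChainFree : quarticTournament.MonoChainFree 6 := by
  refine monoChainFree_of_normalize (n := 4) (fun a b => a = 0 ∧ (b = 1 ∨ b = 2))
    quarticTournament_normalize ?_
  rintro f col hf ⟨h0, hr⟩
  have hchain : ∀ i j, i < j → quarticChar (f j - f i) = quarticChar (f 1) := fun i j hij => by
    rw [quarticChar_eq_of_isMonoChain hf hij (show (0 : Fin 6) < 1 by decide), h0, sub_zero]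
  have := hasChain_eq_true (r := fun x y => quarticChar (y - x) = quarticChar (f 1))
    (s := univ.filter fun x => quarticChar (x - 0) = quarticChar (f 1) ∧
        quarticChar (x - f 1) = quarticChar (f 1))
    (f := fun i : Fin 4 => f i.succ.succ) (fun i => ?_) fun i j hij => hchain _ _ ?_
  · rw [hasChain_quarticChar_eq_false _ hr] at this
    exact Bool.false_ne_true this
  · rw [mem_filter, ← h0]
    exact ⟨mem_univ _, hchain _ _ (Fin.succ_pos _),
      hchain _ _ (Fin.succ_lt_succ_iff.2 (Fin.succ_pos i))⟩
  · exact Fin.succ_lt_succ_iff.2 (Fin.succ_lt_succ_iff.2 hij)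

end Quartic829

namespace Paley27

open ColoredTournament

/-- `(a, b, c)` stands for `a + b X + c X²` in `𝔽₂₇ = 𝔽₃[X] / (X³ - X - 1)`. Only the additive
structure of the product is used: `mul` below is the field multiplication, and the field's `1` is
`(1, 0, 0)`. -/
abbrev F27 := ZMod 3 × ZMod 3 × ZMod 3

-- reduced with `X³ = X + 1` and `X⁴ = X² + X`
def mul (x y : F27) : F27 :=
  let c3 := x.2.1 * y.2.2 + x.2.2 * y.2.1
  let c4 := x.2.2 * y.2.2
  (x.1 * y.1 + c3, x.1 * y.2.1 + x.2.1 * y.1 + c3 + c4,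
    x.1 * y.2.2 + x.2.1 * y.2.1 + x.2.2 * y.1 + c4)

/-- `x ^ 13`, which by Euler's criterion is `(1, 0, 0)` exactly on the nonzero squares; since
`27 ≡ 3 [MOD 4]`, exactly one of `d`, `-d` is a square for `d ≠ 0`. -/
def quadraticChar (x : F27) : F27 :=
  let x2 := mul x x
  let x4 := mul x2 x2
  mul (mul (mul x4 x4) x4) x

def paleyTournament : ColoredTournament F27 1 :=
  cayley 1 (fun d => quadraticChar d = (1, 0, 0)) (fun _ => 1) (by decide) (by decide)
    fun _ _ => ⟨le_rfl, le_rfl⟩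

theorem hasChain_quadraticChar_eq_false :
    hasChain (fun x y => quadraticChar (y - x) = (1, 0, 0)) 5
      (univ.filter fun x => quadraticChar (x - 0) = (1, 0, 0)) = false := by
  decide +kernel

theorem paleyTournament_monoChainFree : paleyTournament.MonoChainFree 6 := by
  refine monoChainFree_of_normalize (n := 4) (fun a _ => a = 0)
    (fun u _ _ => ⟨(· - u), isEndomorphism_cayley _ _ _ (ψ := id)
      (fun _ _ => sub_sub_sub_cancel_right _ _ _) fun _ h => ⟨h, rfl⟩, sub_self u⟩) ?_
  intro f col hf h0
  have := hasChain_eq_true (r := fun x y => quadraticChar (y - x) = (1, 0, 0))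
    (s := univ.filter fun x => quadraticChar (x - 0) = (1, 0, 0))
    (f := fun i : Fin 5 => f i.succ)
    (fun i => mem_filter.2 ⟨mem_univ _, h0 ▸ (hf _ _ i.succ_pos).1⟩)
    fun i j hij => (hf _ _ (Fin.succ_lt_succ_iff.2 hij)).1
  rw [hasChain_quadraticChar_eq_false] at this
  exact Bool.false_ne_true this

end Paley27

open ColoredTournament in
theorem exists_monoChainFree (k : ℕ) :
    ∃ T : ColoredTournament (Fin (829 * 27 ^ k)) (k + 2), T.MonoChainFree 6 := by
  induction k with
  | zero =>
    exact ⟨Quartic829.quarticTournament.comap (Fintype.equivOfCardEq (by simp)).toEmbedding,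
      Quartic829.quarticTournament_monoChainFree.comap _⟩
  | succ k ih =>
    obtain ⟨T, hT⟩ := ih
    exact ⟨(T.lexProd Paley27.paleyTournament).comap
        (Fintype.equivOfCardEq (by simp [pow_succ, mul_assoc])).toEmbedding,
      (hT.lexProd Paley27.paleyTournament_monoChainFree).comap _⟩

/-- For every integer `t ≥ 2`, `R_t(6) ≥ 829 * 27 ^ (t - 2) + 1`: there exists a
`t`-edge-colored tournament on `829 * 27 ^ (t - 2)` vertices containing no monochromatic
transitive subtournament of order 6. -/
theorem stmt_11 :
    ∀ t : ℕ, 2 ≤ t →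
      ∃ (r : Fin (829 * 27 ^ (t - 2)) → Fin (829 * 27 ^ (t - 2)) → Prop)
        (c : Fin (829 * 27 ^ (t - 2)) → Fin (829 * 27 ^ (t - 2)) → ℕ),
        (∀ v, ¬ r v v) ∧
        (∀ u v : Fin (829 * 27 ^ (t - 2)), u ≠ v → (r u v ↔ ¬ r v u)) ∧
        (∀ u v, r u v → 1 ≤ c u v ∧ c u v ≤ t) ∧
        ¬ ∃ (s : Finset (Fin (829 * 27 ^ (t - 2)))) (col : ℕ),
            s.card = 6 ∧
            (∀ a ∈ s, ∀ b ∈ s, r a b → c a b = col) ∧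
            (∀ a ∈ s, ∀ b ∈ s, ∀ d ∈ s, r a b → r b d → r a d) := by
  intro t ht
  obtain ⟨T, hT⟩ := exists_monoChainFree (t - 2)
  refine ⟨T.Adj, T.color, T.irrefl, T.adj_iff_not_adj, fun u v huv => ?_,
    hT.not_exists_transitive⟩
  have := T.color_mem u v huv
  omega
end

section
/- The edge-colored digraph M_k(q) is vertex transitive: for any two vertices u and v of M_k(q) there exists a bijection f of the vertex set of M_k(q) with f(u) = v such that for all vertices x, y and all colors 0 ≤ i ≤ k/2, x → y is an edge of color i if and only if f(x) → f(y) is an edge of color i. -/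
/-- `S_k = ⟨ω^k⟩`, the set of nonzero `k`-th power residues of `F`
(for `ω` a primitive element of the finite field `F`). -/
def Sk {F : Type} [Field F] (ω : F) (k : ℕ) : Set F :=
  {x | ∃ n : ℕ, x = ω ^ (k * n)}

/-- `S_{k,0} = {0}` and `S_{k,i} = ω^(i-1) • S_k` for `i ≥ 1`. -/
def Ski {F : Type} [Field F] (ω : F) (k : ℕ) : ℕ → Set F
  | 0 => {0}
  | (i + 1) => {x | ∃ n : ℕ, x = ω ^ i * ω ^ (k * n)}

/-- The vertex set of the Mathon-type digraph `M_k(q)`: equivalence classes of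
`X = (F × F) \ {(0,0)}` under `(a,b) ~ (ag,bg)` for `g ∈ S_k`. -/
def Vtx (F : Type) [Field F] (ω : F) (k : ℕ) : Type :=
  Quot (fun p q : {p : F × F // p ≠ (0, 0)} =>
    ∃ g ∈ Sk ω k, q.1 = (p.1.1 * g, p.1.2 * g))

/-- The equivalence class `[a, b]` of a nonzero pair `(a, b)`. -/
def vmk {F : Type} [Field F] (ω : F) (k : ℕ) (p : {p : F × F // p ≠ (0, 0)}) :
    Vtx F ω k :=
  Quot.mk _ p

/-- `[a,b] → [c,d]` is an edge of color `i` in `M_k(q)` iff `bc - ad ∈ S_{k,i}`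
(well-defined since `g S_{k,i} = S_{k,i}` for `g ∈ S_k`). -/
def Edge {F : Type} [Field F] (ω : F) (k : ℕ) (u v : Vtx F ω k) (i : ℕ) : Prop :=
  ∃ p q : {p : F × F // p ≠ (0, 0)},
    u = vmk ω k p ∧ v = vmk ω k q ∧
      p.1.2 * q.1.1 - p.1.1 * q.1.2 ∈ Ski ω k i

namespace MkAux

variable {F : Type} [Field F]

/-- action of a det-1 matrix `[[α,β],[γ,δ]]` on nonzero row vectors. -/
def T (α β γ δ : F) (h : α * δ - β * γ = 1) (p : {p : F × F // p ≠ (0, 0)}) :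
    {p : F × F // p ≠ (0, 0)} :=
  ⟨(p.1.1 * α + p.1.2 * γ, p.1.1 * β + p.1.2 * δ), by
    intro hc
    rw [Prod.mk.injEq] at hc
    apply p.2
    have e1 : p.1.1 = 0 := by linear_combination δ * hc.1 - γ * hc.2 - p.1.1 * h
    have e2 : p.1.2 = 0 := by linear_combination -β * hc.1 + α * hc.2 - p.1.2 * h
    exact Prod.ext e1 e2⟩

def Tq (ω : F) (k : ℕ) (α β γ δ : F) (h : α * δ - β * γ = 1) :
    Vtx F ω k → Vtx F ω k :=
  Quot.map (T α β γ δ h) (by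
    rintro p q ⟨g, hg, hpq⟩
    refine ⟨g, hg, ?_⟩
    simp only [T, hpq]
    rw [Prod.mk.injEq]
    constructor <;> ring)

lemma Tq_mk (ω : F) (k : ℕ) (α β γ δ : F) (h : α * δ - β * γ = 1)
    (p : {p : F × F // p ≠ (0, 0)}) :
    Tq ω k α β γ δ h (vmk ω k p) = vmk ω k (T α β γ δ h p) := rfl

lemma edge_T (ω : F) (k : ℕ) (α β γ δ : F) (h : α * δ - β * γ = 1)
    (x y : Vtx F ω k) (i : ℕ) (he : Edge ω k x y i) :
    Edge ω k (Tq ω k α β γ δ h x) (Tq ω k α β γ δ h y) i := by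
  obtain ⟨p, q, hx, hy, hm⟩ := he
  refine ⟨T α β γ δ h p, T α β γ δ h q, by rw [hx]; rfl, by rw [hy]; rfl, ?_⟩
  have key : (T α β γ δ h p).1.2 * (T α β γ δ h q).1.1
      - (T α β γ δ h p).1.1 * (T α β γ δ h q).1.2
      = p.1.2 * q.1.1 - p.1.1 * q.1.2 := by
    simp only [T]
    linear_combination (p.1.2 * q.1.1 - p.1.1 * q.1.2) * h
  rw [key]; exact hm

lemma T_T_left (α β γ δ : F) (h : α * δ - β * γ = 1)
    (h' : δ * α - (-β) * (-γ) = 1) (p : {p : F × F // p ≠ (0, 0)}) :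
    T δ (-β) (-γ) α h' (T α β γ δ h p) = p := by
  apply Subtype.ext
  apply Prod.ext
  · show (T α β γ δ h p).1.1 * δ + (T α β γ δ h p).1.2 * (-γ) = p.1.1
    simp only [T]
    linear_combination p.1.1 * h
  · show (T α β γ δ h p).1.1 * (-β) + (T α β γ δ h p).1.2 * α = p.1.2
    simp only [T]
    linear_combination p.1.2 * h

lemma T_T_right (α β γ δ : F) (h : α * δ - β * γ = 1)
    (h' : δ * α - (-β) * (-γ) = 1) (p : {p : F × F // p ≠ (0, 0)}) :
    T α β γ δ h (T δ (-β) (-γ) α h' p) = p := by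
  apply Subtype.ext
  apply Prod.ext
  · show (T δ (-β) (-γ) α h' p).1.1 * α + (T δ (-β) (-γ) α h' p).1.2 * γ = p.1.1
    simp only [T]
    linear_combination p.1.1 * h
  · show (T δ (-β) (-γ) α h' p).1.1 * β + (T δ (-β) (-γ) α h' p).1.2 * δ = p.1.2
    simp only [T]
    linear_combination p.1.2 * h

lemma one_mem_Sk (ω : F) (k : ℕ) : (1 : F) ∈ Sk ω k :=
  ⟨0, by simp⟩

open Classical in
/-- completion of a nonzero vector to a det-1 matrix: gives `(c,d)` with
`a*d - b*c = 1`. -/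
noncomputable def comp2 (p : {p : F × F // p ≠ (0, 0)}) : F × F :=
  if p.1.1 = 0 then (-(p.1.2)⁻¹, 0) else (0, (p.1.1)⁻¹)

lemma comp2_det (p : {p : F × F // p ≠ (0, 0)}) :
    p.1.1 * (comp2 p).2 - p.1.2 * (comp2 p).1 = 1 := by
  classical
  unfold comp2
  by_cases ha : p.1.1 = 0
  · have hb : p.1.2 ≠ 0 := by
      intro hb; exact p.2 (Prod.ext ha hb)
    simp [ha, hb]
  · simp [ha]

end MkAux

/-- `M_k(q)` is vertex transitive: for any two vertices `u, v` there is a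
color-preserving automorphism sending `u` to `v`. -/
theorem stmt_13 (k : ℕ) (hk2 : 2 ≤ k) (hke : Even k)
    (F : Type) [Field F] [Fintype F]
    (hq : Fintype.card F % (2 * k) = k + 1)
    (ω : F) (hω : ∀ x : F, x ≠ 0 → ∃ n : ℕ, x = ω ^ n) :
    ∀ u v : Vtx F ω k, ∃ f : Vtx F ω k → Vtx F ω k,
      Function.Bijective f ∧ f u = v ∧
      ∀ x y : Vtx F ω k, ∀ i : ℕ, i ≤ k / 2 →
        (Edge ω k x y i ↔ Edge ω k (f x) (f y) i) := by
  intro u v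
  induction u using Quot.ind with
  | _ p =>
  induction v using Quot.ind with
  | _ q =>
  classical
  obtain ⟨cpdp, hp⟩ : ∃ w : F × F, p.1.1 * w.2 - p.1.2 * w.1 = 1 :=
    ⟨MkAux.comp2 p, MkAux.comp2_det p⟩
  obtain ⟨cqdq, hq2⟩ : ∃ w : F × F, q.1.1 * w.2 - q.1.2 * w.1 = 1 :=
    ⟨MkAux.comp2 q, MkAux.comp2_det q⟩
  set a := p.1.1; set b := p.1.2
  set c := q.1.1; set d := q.1.2
  set cp := cpdp.1; set dp := cpdp.2
  set cq := cqdq.1; set dq := cqdq.2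
  set α := dp * c - b * cq with hα
  set β := dp * d - b * dq with hβ
  set γ := -cp * c + a * cq with hγ
  set δ := -cp * d + a * dq with hδ
  have h : α * δ - β * γ = 1 := by
    rw [hα, hβ, hγ, hδ]
    linear_combination (c * dq - d * cq) * hp + hq2
  have h' : δ * α - (-β) * (-γ) = 1 := by linear_combination h
  refine ⟨MkAux.Tq ω k α β γ δ h, ?_, ?_, ?_⟩
  · rw [Function.bijective_iff_has_inverse]
    refine ⟨MkAux.Tq ω k δ (-β) (-γ) α h', ?_, ?_⟩
    · intro w
      induction w using Quot.ind with
      | _ r => exact congrArg (Quot.mk _) (MkAux.T_T_left α β γ δ h h' r)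
    · intro w
      induction w using Quot.ind with
      | _ r => exact congrArg (Quot.mk _) (MkAux.T_T_right α β γ δ h h' r)
  · show Quot.mk _ (MkAux.T α β γ δ h p) = Quot.mk _ q
    refine congrArg (Quot.mk _) (Subtype.ext (Prod.ext ?_ ?_))
    · show a * α + b * γ = c
      rw [hα, hγ]
      linear_combination c * hp
    · show a * β + b * δ = d
      rw [hβ, hδ]
      linear_combination d * hp
  · intro x y i _
    constructor
    · exact MkAux.edge_T ω k α β γ δ h x y i
    · intro he
      have h2 := MkAux.edge_T ω k δ (-β) (-γ) α h' _ _ i he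
      have hL : ∀ w : Vtx F ω k,
          MkAux.Tq ω k δ (-β) (-γ) α h' (MkAux.Tq ω k α β γ δ h w) = w := by
        intro w
        induction w using Quot.ind with
        | _ r => exact congrArg (Quot.mk _) (MkAux.T_T_left α β γ δ h h' r)
      rwa [hL x, hL y] at h2
end

section
/- Let Γ_0 be the subgraph of M_k(q) induced by the color-0 edges. Then Γ_0 is the disjoint union of q+1 color-0 cliques of order k: the relation on the vertex set of M_k(q) given by 'u = v, or u → v and v → u are both edges of color 0' is an equivalence relation with exactly q+1 equivalence classes, each of size k, and within each class every pair of distinct vertices is joined by two oppositely oriented color-0 edges. -/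
/-- The relation "`u = v`, or `u → v` and `v → u` are both color-0 edges". -/
def Rel0 {F : Type} [Field F] (ω : F) (k : ℕ) (u v : Vtx F ω k) : Prop :=
  u = v ∨ (Edge ω k u v 0 ∧ Edge ω k v u 0)


/-!
Colour-0 adjacency `[a, b] → [c, d]` says `bc - ad = 0`, i.e. that `(a, b)` and `(c, d)` span the
same line of `F²`. So `Rel0` is the kernel of the map `[a, b] ↦ F·(a, b)` from the vertices onto
the projective line `ℙ¹(F)`, and its classes are the `q + 1` fibres of this map. The fibre over
the line of `(a, b)` consists of the vertices `[ωʲ a, ωʲ b]`, and as `ω` has order `q - 1`, a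
multiple of `k`, two of them coincide exactly when their exponents agree modulo `k`.
-/

open Projectivization
open scoped LinearAlgebra.Projectivization

theorem ncard_fibers_of_surjective {α β : Type*} {f : α → β} (hf : Function.Surjective f) :
    {s : Set α | ∃ a, s = {b | f a = f b}}.ncard = Nat.card β := by
  have hrange : {s : Set α | ∃ a, s = {b | f a = f b}} = Set.range fun y => {b | y = f b} := by
    ext s
    constructor
    · rintro ⟨a, rfl⟩
      exact ⟨f a, rfl⟩
    · rintro ⟨y, rfl⟩
      obtain ⟨a, rfl⟩ := hf y
      exact ⟨a, rfl⟩
  rw [hrange, Set.ncard_range_of_injective]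
  intro y y' h
  obtain ⟨a, rfl⟩ := hf y
  exact ((Set.ext_iff.1 h a).1 rfl).symm

theorem dvd_sub_one_of_mod_two_mul_eq {q k : ℕ} (hq : q % (2 * k) = k + 1) : k ∣ q - 1 := by
  refine ⟨2 * (q / (2 * k)) + 1, Nat.sub_eq_of_eq_add ?_⟩
  have := Nat.div_add_mod q (2 * k)
  rw [hq] at this
  linarith

section FiniteField

variable {F : Type} [Field F] [Fintype F] {ω : F}

theorem ne_zero_of_forall_eq_pow (hF : 2 < Fintype.card F)
    (hgen : ∀ x : F, x ≠ 0 → ∃ n : ℕ, x = ω ^ n) : ω ≠ 0 := by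
  classical
  rintro rfl
  obtain ⟨x, -, hx⟩ := Finset.exists_mem_notMem_of_card_lt_card
    (s := {0, 1}) (t := Finset.univ) (Finset.card_le_two.trans_lt hF)
  rw [Finset.mem_insert, Finset.mem_singleton, not_or] at hx
  obtain ⟨n, rfl⟩ := hgen x hx.1
  rcases n with _ | n <;> simp at hx

theorem orderOf_eq_card_sub_one_of_forall_eq_pow (hω : ω ≠ 0)
    (hgen : ∀ x : F, x ≠ 0 → ∃ n : ℕ, x = ω ^ n) : orderOf ω = Fintype.card F - 1 := by
  classical
  have hzpowers : ∀ x : Fˣ, x ∈ Subgroup.zpowers (Units.mk0 ω hω) := by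
    intro x
    obtain ⟨n, hn⟩ := hgen x x.ne_zero
    exact ⟨n, Units.ext (by simp [hn])⟩
  rw [← Units.val_mk0 hω, orderOf_units, orderOf_eq_card_of_forall_mem_zpowers hzpowers,
    Nat.card_eq_fintype_card, Fintype.card_units]

end FiniteField

theorem Projectivization.mk_eq_mk_iff_mul_sub_mul_eq_zero {F : Type} [Field F] {p q : F × F}
    (hp : p ≠ 0) (hq : q ≠ 0) : mk F p hp = mk F q hq ↔ p.2 * q.1 - p.1 * q.2 = 0 := by
  rw [mk_eq_mk_iff']
  constructor
  · rintro ⟨a, rfl⟩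
    simp only [Prod.smul_fst, Prod.smul_snd, smul_eq_mul]
    ring
  · intro h
    by_cases hq₁ : q.1 = 0
    · have hq₂ : q.2 ≠ 0 := fun hq₂ => hq (Prod.ext hq₁ hq₂)
      have hp₁ : p.1 = 0 := by simpa [hq₁, hq₂] using h
      refine ⟨p.2 / q.2, Prod.ext ?_ ?_⟩
      · simp [hq₁, hp₁]
      · simp [div_mul_cancel₀ _ hq₂]
    · refine ⟨p.1 / q.1, Prod.ext ?_ ?_⟩
      · simp [div_mul_cancel₀ _ hq₁]
      · simp only [Prod.smul_snd, smul_eq_mul]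
        field_simp
        linear_combination -h

section ColorZero

variable {F : Type} [Field F] {ω : F} {k : ℕ}

def Vtx.proj : Vtx F ω k → ℙ F (F × F) :=
  Quot.lift (fun p => mk F p.1 p.2) <| by
    rintro p q ⟨g, -, hq⟩
    refine ((mk_eq_mk_iff' F _ _ _ _).2 ⟨g, ?_⟩).symm
    rw [hq]
    ext <;> simp [mul_comm]

theorem Vtx.proj_surjective : Function.Surjective (Vtx.proj (ω := ω) (k := k)) := by
  intro x
  induction x with
  | h v hv => exact ⟨vmk ω k ⟨v, hv⟩, rfl⟩

theorem edge_zero_iff {u v : Vtx F ω k} : Edge ω k u v 0 ↔ u.proj = v.proj := by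
  constructor
  · rintro ⟨p, q, rfl, rfl, h⟩
    exact (mk_eq_mk_iff_mul_sub_mul_eq_zero _ _).2 h
  · intro h
    obtain ⟨p, rfl⟩ := Quot.exists_rep u
    obtain ⟨q, rfl⟩ := Quot.exists_rep v
    exact ⟨p, q, rfl, rfl, (mk_eq_mk_iff_mul_sub_mul_eq_zero p.2 q.2).1 h⟩

theorem rel0_iff {u v : Vtx F ω k} : Rel0 ω k u v ↔ u.proj = v.proj := by
  rw [Rel0, edge_zero_iff, edge_zero_iff]
  constructor
  · rintro (rfl | ⟨h, -⟩) <;> trivial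
  · exact fun h => Or.inr ⟨h, h.symm⟩

theorem rel0_equivalence : Equivalence (Rel0 ω k) :=
  ⟨fun _ => rel0_iff.2 rfl, fun h => rel0_iff.2 (rel0_iff.1 h).symm,
    fun h h' => rel0_iff.2 ((rel0_iff.1 h).trans (rel0_iff.1 h'))⟩

end ColorZero

section Fibers

variable {F : Type} [Field F] {ω : F} {k : ℕ}

theorem equivalence_scaling_by_Sk (hN : 0 < orderOf ω) :
    Equivalence fun p q : {p : F × F // p ≠ (0, 0)} =>
      ∃ g ∈ Sk ω k, q.1 = (p.1.1 * g, p.1.2 * g) where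
  refl p := ⟨1, ⟨0, by simp⟩, by simp⟩
  symm := by
    rintro p q ⟨_, ⟨n, rfl⟩, hq⟩
    obtain ⟨N, hN⟩ : ∃ N, orderOf ω = N + 1 := Nat.exists_eq_succ_of_ne_zero hN.ne'
    have hinv : ω ^ (k * n) * ω ^ (k * (n * N)) = 1 := by
      rw [← pow_add, show k * n + k * (n * N) = (N + 1) * (k * n) by ring, pow_mul, ← hN,
        pow_orderOf_eq_one, one_pow]
    refine ⟨_, ⟨n * N, rfl⟩, ?_⟩
    rw [hq]
    ext <;> simp [mul_assoc, hinv]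
  trans := by
    rintro p q r ⟨_, ⟨n, rfl⟩, hq⟩ ⟨_, ⟨m, rfl⟩, hr⟩
    refine ⟨_, ⟨n + m, rfl⟩, ?_⟩
    rw [hr, hq]
    ext <;> simp [mul_add, pow_add, mul_assoc]

theorem vmk_eq_vmk_iff (hN : 0 < orderOf ω) {p q : {p : F × F // p ≠ (0, 0)}} :
    vmk ω k p = vmk ω k q ↔ ∃ g ∈ Sk ω k, q.1 = (p.1.1 * g, p.1.2 * g) :=
  ⟨fun h => (equivalence_scaling_by_Sk hN).eqvGen_iff.1 (Quot.eqvGen_exact h),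
    fun h => Quot.sound h⟩

def scalePair (t : F) (ht : t ≠ 0) (p : {p : F × F // p ≠ (0, 0)}) :
    {p : F × F // p ≠ (0, 0)} :=
  ⟨t • p.1, smul_ne_zero ht p.2⟩

theorem vmk_scalePair_pow_add_mul (hω : ω ≠ 0) (p : {p : F × F // p ≠ (0, 0)}) (i n : ℕ) :
    vmk ω k (scalePair (ω ^ (i + k * n)) (pow_ne_zero _ hω) p) =
      vmk ω k (scalePair (ω ^ i) (pow_ne_zero _ hω) p) :=
  (Quot.sound ⟨ω ^ (k * n), ⟨n, rfl⟩, by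
    ext <;> simp [scalePair, pow_add, mul_comm, mul_assoc]⟩).symm

theorem setOf_proj_vmk_eq (hω : ω ≠ 0) (hk : 0 < k)
    (hgen : ∀ x : F, x ≠ 0 → ∃ n : ℕ, x = ω ^ n) (p : {p : F × F // p ≠ (0, 0)}) :
    {v | (vmk ω k p).proj = v.proj} =
      Set.range fun j : Fin k => vmk ω k (scalePair (ω ^ (j : ℕ)) (pow_ne_zero _ hω) p) := by
  ext v
  constructor
  · obtain ⟨q, rfl⟩ := Quot.exists_rep v
    intro h
    obtain ⟨a, ha⟩ := (mk_eq_mk_iff' F _ _ q.2 p.2).1 h.symm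
    have ha0 : a ≠ 0 := by
      rintro rfl
      exact q.2 (by rw [← ha, zero_smul]; rfl)
    obtain ⟨n, rfl⟩ := hgen a ha0
    refine ⟨⟨n % k, Nat.mod_lt n hk⟩, ?_⟩
    show vmk ω k (scalePair (ω ^ (n % k)) _ p) = vmk ω k q
    rw [← vmk_scalePair_pow_add_mul hω p _ (n / k)]
    simp only [Nat.mod_add_div]
    exact congrArg (vmk ω k) (Subtype.ext ha)
  · rintro ⟨j, rfl⟩
    refine (mk_eq_mk_iff' F _ _ _ _).2 ⟨(ω ^ (j : ℕ))⁻¹, ?_⟩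
    simp [scalePair, smul_smul, hω]

theorem vmk_scalePair_pow_injective (hN : 0 < orderOf ω) (hkN : k ∣ orderOf ω)
    (hω : ω ≠ 0) (p : {p : F × F // p ≠ (0, 0)}) :
    Function.Injective fun j : Fin k =>
      vmk ω k (scalePair (ω ^ (j : ℕ)) (pow_ne_zero _ hω) p) := by
  intro i j h
  obtain ⟨_, ⟨n, rfl⟩, hij⟩ := (vmk_eq_vmk_iff hN).1 h
  have hpow : ω ^ (j : ℕ) = ω ^ ((i : ℕ) + k * n) := by
    refine smul_left_injective F p.2 ?_
    show ω ^ (j : ℕ) • p.1 = ω ^ ((i : ℕ) + k * n) • p.1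
    simp only [scalePair] at hij
    rw [hij]
    ext <;> simp [pow_add, mul_comm, mul_assoc]
  have hmod : (j : ℕ) ≡ i [MOD k] :=
    (((orderOf_pos_iff.1 hN).pow_eq_pow_iff_modEq.1 hpow).of_dvd hkN).trans
      (Nat.add_mul_mod_self_left _ _ _)
  exact Fin.ext (hmod.eq_of_lt_of_lt j.2 i.2).symm

theorem ncard_setOf_proj_eq (hN : 0 < orderOf ω) (hkN : k ∣ orderOf ω)
    (hgen : ∀ x : F, x ≠ 0 → ∃ n : ℕ, x = ω ^ n) (u : Vtx F ω k) :
    {v : Vtx F ω k | u.proj = v.proj}.ncard = k := by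
  have hω : ω ≠ 0 := fun h => by simp [h] at hN
  obtain ⟨p, rfl⟩ := Quot.exists_rep u
  rw [← vmk, setOf_proj_vmk_eq hω (Nat.pos_of_dvd_of_pos hkN hN) hgen,
    Set.ncard_range_of_injective (vmk_scalePair_pow_injective hN hkN hω p), Nat.card_fin]

end Fibers

theorem stmt_14_general (k : ℕ) (hk2 : 2 ≤ k)
    (F : Type) [Field F] [Fintype F]
    (hq : Fintype.card F % (2 * k) = k + 1)
    (ω : F) (hω : ∀ x : F, x ≠ 0 → ∃ n : ℕ, x = ω ^ n) :
    Equivalence (Rel0 ω k) ∧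
    {s : Set (Vtx F ω k) | ∃ u, s = {v | Rel0 ω k u v}}.ncard
        = Fintype.card F + 1 ∧
    (∀ u : Vtx F ω k, {v | Rel0 ω k u v}.ncard = k) ∧
    (∀ u v : Vtx F ω k, Rel0 ω k u v → u ≠ v →
      Edge ω k u v 0 ∧ Edge ω k v u 0) := by
  have hF : k + 1 ≤ Fintype.card F := hq ▸ Nat.mod_le _ _
  have hω0 : ω ≠ 0 := ne_zero_of_forall_eq_pow (by omega) hω
  have hord := orderOf_eq_card_sub_one_of_forall_eq_pow hω0 hω
  have hN : 0 < orderOf ω := by omega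
  have hkN : k ∣ orderOf ω := hord ▸ dvd_sub_one_of_mod_two_mul_eq hq
  have hrel : Rel0 ω k = fun u v => u.proj = v.proj := funext₂ fun _ _ => propext rel0_iff
  refine ⟨rel0_equivalence, ?_, fun u => ?_, fun u v h hne => h.resolve_left hne⟩
  · simp only [hrel]
    rw [ncard_fibers_of_surjective Vtx.proj_surjective,
      card_of_finrank_two F (F × F) (by simp), Nat.card_eq_fintype_card]
  · simp only [hrel]
    exact ncard_setOf_proj_eq hN hkN hω u

/-- `Γ_0`, the color-0 subgraph of `M_k(q)`, is the disjoint union of `q + 1`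
color-0 cliques of order `k`: `Rel0` is an equivalence relation with exactly
`q + 1` classes, each of size `k`, and within each class every pair of distinct
vertices is joined by two oppositely oriented color-0 edges. -/
theorem stmt_14 (k : ℕ) (hk2 : 2 ≤ k) (hke : Even k)
    (F : Type) [Field F] [Fintype F]
    (hq : Fintype.card F % (2 * k) = k + 1)
    (ω : F) (hω : ∀ x : F, x ≠ 0 → ∃ n : ℕ, x = ω ^ n) :
    Equivalence (Rel0 ω k) ∧
    {s : Set (Vtx F ω k) | ∃ u, s = {v | Rel0 ω k u v}}.ncard
        = Fintype.card F + 1 ∧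
    (∀ u : Vtx F ω k, {v | Rel0 ω k u v}.ncard = k) ∧
    (∀ u v : Vtx F ω k, Rel0 ω k u v → u ≠ v →
      Edge ω k u v 0 ∧ Edge ω k v u 0) :=
  stmt_14_general k hk2 F hq ω hω
end

section
/- Let i ∈ {1, 2, …, k/2} and let v be a vertex of M_k(q). Let ON_i(v) be the set of vertices w such that v → w is an edge of color i. Then the induced edge-colored subgraph of M_k(q) on ON_i(v) is isomorphic to the multicolor k-th power Paley tournament P_k(q): there exists a bijection φ : ON_i(v) → F_q such that for all u, w ∈ ON_i(v) and all s ∈ {1, …, k/2}, u → w is an edge of color s in M_k(q) if and only if φ(w) − φ(u) ∈ S_{k,s}. -/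
/-!
Fix a representative `p` of `v` and write `cross p q = p.2 * q.1 - p.1 * q.2`, so that
`[p] → [q]` has the color of `cross p q`, and `cross p (g • q) = g * cross p q`. Since the
representatives of a vertex differ by factors in `S_k`, every color-`i` out-neighbour of `v` has
exactly one representative on the affine line `{q | cross p q = ω^(i-1)} = q₀ + F p`.
Parametrizing this line as `x ↦ q₀ - (x / ω^(i-1)) • p` makes `cross` of two of its points the
difference `y - x` of their parameters, which is the Paley color of `x → y`.
-/

namespace Mathon

section Cross

variable {F : Type*} [Field F]

def cross (p q : F × F) : F := p.2 * q.1 - p.1 * q.2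

@[simp] lemma cross_self (p : F × F) : cross p p = 0 := by
  simp [cross, mul_comm]

@[simp] lemma cross_zero_left (q : F × F) : cross 0 q = 0 := by
  simp [cross]

@[simp] lemma cross_smul_left (g : F) (p q : F × F) : cross (g • p) q = g * cross p q := by
  simp only [cross, Prod.smul_fst, Prod.smul_snd, smul_eq_mul]; ring

@[simp] lemma cross_smul_right (g : F) (p q : F × F) : cross p (g • q) = g * cross p q := by
  simp only [cross, Prod.smul_fst, Prod.smul_snd, smul_eq_mul]; ring

lemma cross_swap (p q : F × F) : cross q p = -cross p q := by
  simp only [cross]; ring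

lemma cross_sub_left (p q r : F × F) : cross (p - q) r = cross p r - cross q r := by
  simp only [cross, Prod.fst_sub, Prod.snd_sub]; ring

lemma cross_sub_right (p q r : F × F) : cross p (q - r) = cross p q - cross p r := by
  simp only [cross, Prod.fst_sub, Prod.snd_sub]; ring

lemma exists_cross_eq {p : F × F} (hp : p ≠ 0) (e : F) : ∃ q, cross p q = e := by
  obtain ⟨a, b⟩ := p
  by_cases hb : b = 0
  · have ha : a ≠ 0 := by rintro rfl; exact hp (by simp [hb])
    exact ⟨(0, -e / a), by simp [cross]; field_simp⟩
  · exact ⟨(e / b, 0), by simp [cross]; field_simp⟩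

lemma exists_eq_smul_of_cross_eq_zero {p r : F × F} (hp : p ≠ 0) (h : cross p r = 0) :
    ∃ t : F, r = t • p := by
  obtain ⟨a, b⟩ := p
  obtain ⟨c, d⟩ := r
  simp only [cross] at h
  by_cases ha : a = 0
  · have hb : b ≠ 0 := by rintro rfl; exact hp (by simp [ha])
    have hc : c = 0 := by simpa [ha, hb] using h
    exact ⟨d / b, by simp [ha, hc]; field_simp⟩
  · refine ⟨c / a, ?_⟩
    ext <;> simp only [Prod.smul_mk, smul_eq_mul] <;> field_simp
    linear_combination -h

/-- A parametrization of the line `{q | cross p q = cross p q₀}` under which `cross` of two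
points is the difference of their parameters (when `cross p q₀ ≠ 0`). -/
def lineParam (p q₀ : F × F) (x : F) : F × F := q₀ - (x / cross p q₀) • p

@[simp] lemma cross_lineParam_right (p q₀ : F × F) (x : F) :
    cross p (lineParam p q₀ x) = cross p q₀ := by
  simp [lineParam, cross_sub_right]

lemma cross_lineParam {p q₀ : F × F} (h : cross p q₀ ≠ 0) (x y : F) :
    cross (lineParam p q₀ x) (lineParam p q₀ y) = y - x := by
  simp only [lineParam, cross_sub_left, cross_sub_right, cross_smul_left, cross_smul_right,
    cross_self, cross_swap p q₀]
  field_simp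
  ring

lemma lineParam_ne_zero {p q₀ : F × F} (h : cross p q₀ ≠ 0) (x : F) : lineParam p q₀ x ≠ 0 :=
  fun h0 => h (by rw [← cross_lineParam_right p q₀ x, h0]; simp [cross])

lemma exists_lineParam_eq {p q₀ q : F × F} (h : cross p q₀ ≠ 0) (hq : cross p q = cross p q₀) :
    ∃ x, lineParam p q₀ x = q := by
  have hp : p ≠ 0 := by rintro rfl; simp at h
  obtain ⟨t, ht⟩ := exists_eq_smul_of_cross_eq_zero hp
    (show cross p (q - q₀) = 0 by rw [cross_sub_right, hq, sub_self])
  refine ⟨-t * cross p q₀, ?_⟩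
  rw [lineParam, neg_mul, neg_div, mul_div_cancel_right₀ _ h, neg_smul, sub_neg_eq_add, ← ht,
    add_sub_cancel]

end Cross

lemma two_lt_card_of_card_mod {α : Type*} [Fintype α] [Nontrivial α] {k : ℕ}
    (hq : Fintype.card α % (2 * k) = k + 1) : 2 < Fintype.card α := by
  have hcard := Fintype.one_lt_card (α := α)
  have hle := Nat.mod_le (Fintype.card α) (2 * k)
  rcases Nat.eq_zero_or_pos k with rfl | hk
  · simp at hq; omega
  · have := Nat.mod_lt (Fintype.card α) (show 0 < 2 * k by omega)
    omega

section Residues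

variable {F : Type} [Field F] {ω : F} {k : ℕ}

lemma ne_zero_of_forall_ne_zero_eq_pow [Fintype F] (hcard : 2 < Fintype.card F)
    (hω : ∀ x : F, x ≠ 0 → ∃ n : ℕ, x = ω ^ n) : ω ≠ 0 := by
  rintro rfl
  have h01 (x : F) : x = 0 ∨ x = 1 := by
    by_cases hx : x = 0
    · exact Or.inl hx
    · obtain ⟨n, rfl⟩ := hω x hx
      rcases n with _ | n <;> simp
  obtain ⟨a, b, c, hab, hac, hbc⟩ := Fintype.two_lt_card_iff.1 hcard
  rcases h01 a with rfl | rfl <;> rcases h01 b with rfl | rfl <;> rcases h01 c with rfl | rfl <;>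
    simp_all

lemma one_mem_Sk : (1 : F) ∈ Sk ω k := ⟨0, by simp⟩

lemma mul_mem_Sk {g h : F} (hg : g ∈ Sk ω k) (hh : h ∈ Sk ω k) : g * h ∈ Sk ω k := by
  obtain ⟨m, rfl⟩ := hg
  obtain ⟨n, rfl⟩ := hh
  exact ⟨m + n, by rw [Nat.mul_add, pow_add]⟩

lemma ne_zero_of_mem_Sk (hω0 : ω ≠ 0) {g : F} (hg : g ∈ Sk ω k) : g ≠ 0 := by
  obtain ⟨n, rfl⟩ := hg
  exact pow_ne_zero _ hω0

lemma inv_mem_Sk [Fintype F] (hω0 : ω ≠ 0) {g : F} (hg : g ∈ Sk ω k) : g⁻¹ ∈ Sk ω k := by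
  have hinv : g⁻¹ = g ^ (Fintype.card F - 2) := by
    refine inv_eq_of_mul_eq_one_right ?_
    rw [← pow_succ', show Fintype.card F - 2 + 1 = Fintype.card F - 1 by
      have := Fintype.one_lt_card (α := F); omega]
    exact FiniteField.pow_card_sub_one_eq_one g (ne_zero_of_mem_Sk hω0 hg)
  obtain ⟨n, rfl⟩ := hg
  exact ⟨n * (Fintype.card F - 2), by rw [hinv, ← pow_mul, mul_assoc]⟩

lemma mem_Ski_succ {x : F} {j : ℕ} : x ∈ Ski ω k (j + 1) ↔ ∃ g ∈ Sk ω k, x = ω ^ j * g := by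
  simp [Ski, Sk]

lemma mul_mem_Ski {x g : F} {s : ℕ} (hx : x ∈ Ski ω k s) (hg : g ∈ Sk ω k) :
    x * g ∈ Ski ω k s := by
  rcases s with _ | j
  · simp_all [Ski]
  · obtain ⟨h, hh, rfl⟩ := mem_Ski_succ.1 hx
    exact mem_Ski_succ.2 ⟨h * g, mul_mem_Sk hh hg, by ring⟩

lemma mul_mem_Ski_iff [Fintype F] (hω0 : ω ≠ 0) {x g : F} {s : ℕ} (hg : g ∈ Sk ω k) :
    x * g ∈ Ski ω k s ↔ x ∈ Ski ω k s := by
  refine ⟨fun h => ?_, fun h => mul_mem_Ski h hg⟩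
  simpa [mul_assoc, ne_zero_of_mem_Sk hω0 hg] using mul_mem_Ski h (inv_mem_Sk hω0 hg)

lemma exists_eq_mul_of_mem_Ski [Fintype F] (hω0 : ω ≠ 0) {a b : F} {s : ℕ}
    (ha : a ∈ Ski ω k s) (hb : b ∈ Ski ω k s) (ha0 : a ≠ 0) : ∃ g ∈ Sk ω k, b = a * g := by
  rcases s with _ | j
  · exact absurd ha ha0
  · obtain ⟨g, hg, rfl⟩ := mem_Ski_succ.1 ha
    obtain ⟨h, hh, rfl⟩ := mem_Ski_succ.1 hb
    refine ⟨g⁻¹ * h, mul_mem_Sk (inv_mem_Sk hω0 hg) hh, ?_⟩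
    field_simp [ne_zero_of_mem_Sk hω0 hg]

end Residues

section Vertices

variable {F : Type} [Field F] {ω : F} {k : ℕ}

lemma vmk_surjective : Function.Surjective (vmk ω k) := Quot.mk_surjective

lemma vmk_eq_vmk_iff [Fintype F] (hω0 : ω ≠ 0) {p q : {p : F × F // p ≠ (0, 0)}} :
    vmk ω k p = vmk ω k q ↔ ∃ g ∈ Sk ω k, q.1 = g • p.1 := by
  have hrel (p q : {p : F × F // p ≠ (0, 0)}) :
      (∃ g ∈ Sk ω k, q.1 = (p.1.1 * g, p.1.2 * g)) ↔ ∃ g ∈ Sk ω k, q.1 = g • p.1 := by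
    simp only [Prod.smul_def, smul_eq_mul, mul_comm]
  have hequiv : Equivalence (fun p q : {p : F × F // p ≠ (0, 0)} =>
      ∃ g ∈ Sk ω k, q.1 = (p.1.1 * g, p.1.2 * g)) := by
    simp only [hrel]
    refine ⟨fun p => ⟨1, one_mem_Sk, (one_smul F p.1).symm⟩, ?_, ?_⟩
    · rintro p q ⟨g, hg, hpq⟩
      refine ⟨g⁻¹, inv_mem_Sk hω0 hg, ?_⟩
      rw [hpq, smul_smul, inv_mul_cancel₀ (ne_zero_of_mem_Sk hω0 hg), one_smul]
    · rintro p q r ⟨g, hg, hpq⟩ ⟨h, hh, hqr⟩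
      exact ⟨h * g, mul_mem_Sk hh hg, by rw [hqr, hpq, smul_smul]⟩
  rw [← hrel]
  exact ⟨fun h => hequiv.eqvGen_iff.1 (Quot.eqvGen_exact h), fun h => Quot.sound h⟩

lemma edge_vmk_iff [Fintype F] (hω0 : ω ≠ 0) {p q : {p : F × F // p ≠ (0, 0)}} {s : ℕ} :
    Edge ω k (vmk ω k p) (vmk ω k q) s ↔ cross p.1 q.1 ∈ Ski ω k s := by
  refine ⟨fun ⟨p', q', hp, hq, h⟩ => ?_, fun h => ⟨p, q, rfl, rfl, h⟩⟩
  obtain ⟨g, hg, hp'⟩ := (vmk_eq_vmk_iff hω0).1 hp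
  obtain ⟨g', hg', hq'⟩ := (vmk_eq_vmk_iff hω0).1 hq
  change cross p'.1 q'.1 ∈ Ski ω k s at h
  rwa [hp', hq', cross_smul_left, cross_smul_right, mul_left_comm, ← mul_assoc, mul_comm,
    mul_mem_Ski_iff hω0 (mul_mem_Sk hg' hg)] at h

variable (ω k) in
def lineVtx {p q₀ : F × F} (h : cross p q₀ ≠ 0) (x : F) : Vtx F ω k :=
  vmk ω k ⟨lineParam p q₀ x, lineParam_ne_zero h x⟩

lemma edge_lineVtx_iff [Fintype F] (hω0 : ω ≠ 0) {p q₀ : F × F} (h : cross p q₀ ≠ 0)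
    (x y : F) (s : ℕ) :
    Edge ω k (lineVtx ω k h x) (lineVtx ω k h y) s ↔ y - x ∈ Ski ω k s := by
  rw [lineVtx, lineVtx, edge_vmk_iff hω0, cross_lineParam h]

lemma edge_vmk_lineVtx_iff [Fintype F] (hω0 : ω ≠ 0) {p : {p : F × F // p ≠ (0, 0)}} {q₀ : F × F}
    (h : cross p.1 q₀ ≠ 0) (x : F) (s : ℕ) :
    Edge ω k (vmk ω k p) (lineVtx ω k h x) s ↔ cross p.1 q₀ ∈ Ski ω k s := by
  rw [lineVtx, edge_vmk_iff hω0, cross_lineParam_right]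

lemma lineVtx_injective [Fintype F] (hω0 : ω ≠ 0) {p q₀ : F × F} (h : cross p q₀ ≠ 0) :
    Function.Injective (lineVtx ω k h) := by
  intro x y hxy
  obtain ⟨g, -, hg⟩ := (vmk_eq_vmk_iff hω0).1 hxy
  have hg1 : g = 1 := by
    have := congrArg (cross p) hg
    rw [cross_smul_right, cross_lineParam_right, cross_lineParam_right] at this
    exact (mul_eq_right₀ h).1 this.symm
  have hxy' : lineParam p q₀ y = lineParam p q₀ x := by rwa [hg1, one_smul] at hg
  have := cross_lineParam h x y
  rw [hxy', cross_self] at this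
  exact (sub_eq_zero.1 this.symm).symm

lemma exists_lineVtx_eq [Fintype F] (hω0 : ω ≠ 0) {p : {p : F × F // p ≠ (0, 0)}} {q₀ : F × F}
    {s : ℕ} (h : cross p.1 q₀ ≠ 0) (hq₀ : cross p.1 q₀ ∈ Ski ω k s) {w : Vtx F ω k}
    (hw : Edge ω k (vmk ω k p) w s) : ∃ x, lineVtx ω k h x = w := by
  obtain ⟨q, rfl⟩ := vmk_surjective w
  obtain ⟨g, hg, hgq⟩ :=
    exists_eq_mul_of_mem_Ski hω0 hq₀ ((edge_vmk_iff hω0).1 hw) h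
  have hg0 := ne_zero_of_mem_Sk hω0 hg
  obtain ⟨x, hx⟩ := exists_lineParam_eq h (q := g⁻¹ • q.1) (by
    rw [cross_smul_right, hgq]; field_simp)
  refine ⟨x, (vmk_eq_vmk_iff hω0).2 ⟨g, hg, ?_⟩⟩
  simp only [hx, smul_smul, mul_inv_cancel₀ hg0, one_smul]

theorem exists_bijective_outNeighbour [Fintype F] (hω0 : ω ≠ 0) (v : Vtx F ω k) {s : ℕ}
    (hs : 1 ≤ s) :
    ∃ Ψ : F → {w : Vtx F ω k // Edge ω k v w s}, Function.Bijective Ψ ∧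
      ∀ x y t, Edge ω k (Ψ x).1 (Ψ y).1 t ↔ y - x ∈ Ski ω k t := by
  obtain ⟨p, rfl⟩ := vmk_surjective v
  obtain ⟨j, rfl⟩ := Nat.exists_eq_add_of_le' hs
  obtain ⟨q₀, he⟩ := exists_cross_eq p.2 (ω ^ j)
  have h : cross p.1 q₀ ≠ 0 := he ▸ pow_ne_zero j hω0
  have hmem : cross p.1 q₀ ∈ Ski ω k (j + 1) := mem_Ski_succ.2 ⟨1, one_mem_Sk, by rw [he, mul_one]⟩
  refine ⟨fun x => ⟨lineVtx ω k h x, (edge_vmk_lineVtx_iff hω0 h x _).2 hmem⟩,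
    ⟨fun x y hxy => lineVtx_injective hω0 h (congrArg Subtype.val hxy), ?_⟩,
    edge_lineVtx_iff hω0 h⟩
  rintro ⟨w, hw⟩
  obtain ⟨x, rfl⟩ := exists_lineVtx_eq hω0 h hmem hw
  exact ⟨x, rfl⟩

end Vertices

end Mathon

theorem stmt_17_general (k : ℕ)
    (F : Type) [Field F] [Fintype F]
    (hq : Fintype.card F % (2 * k) = k + 1)
    (ω : F) (hω : ∀ x : F, x ≠ 0 → ∃ n : ℕ, x = ω ^ n) :
    ∀ i : ℕ, 1 ≤ i → i ≤ k / 2 →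
      ∀ v : Vtx F ω k,
        ∃ φ : {w : Vtx F ω k // Edge ω k v w i} → F,
          Function.Bijective φ ∧
          ∀ u w : {w : Vtx F ω k // Edge ω k v w i},
            ∀ s : ℕ, 1 ≤ s → s ≤ k / 2 →
              (Edge ω k u.1 w.1 s ↔ φ w - φ u ∈ Ski ω k s) := by
  intro i hi _ v
  have hω0 : ω ≠ 0 := Mathon.ne_zero_of_forall_ne_zero_eq_pow (Mathon.two_lt_card_of_card_mod hq) hω
  obtain ⟨Ψ, hΨ, hedge⟩ := Mathon.exists_bijective_outNeighbour hω0 v hi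
  let e := Equiv.ofBijective Ψ hΨ
  refine ⟨e.symm, e.symm.bijective, fun u w s _ _ => ?_⟩
  have := hedge (e.symm u) (e.symm w) s
  rwa [show Ψ (e.symm u) = u from e.apply_symm_apply u,
    show Ψ (e.symm w) = w from e.apply_symm_apply w] at this

/-- For `1 ≤ i ≤ k/2` and any vertex `v` of `M_k(q)`, the induced edge-colored
subgraph on the color-`i` out-neighborhood `ON_i(v)` is isomorphic to the
multicolor `k`-th power Paley tournament `P_k(q)`: there is a bijection
`φ : ON_i(v) → F_q` such that `u → w` has color `s` in `M_k(q)` iff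
`φ(w) - φ(u) ∈ S_{k,s}`. -/
theorem stmt_17 (k : ℕ) (hk2 : 2 ≤ k) (hke : Even k)
    (F : Type) [Field F] [Fintype F]
    (hq : Fintype.card F % (2 * k) = k + 1)
    (ω : F) (hω : ∀ x : F, x ≠ 0 → ∃ n : ℕ, x = ω ^ n) :
    ∀ i : ℕ, 1 ≤ i → i ≤ k / 2 →
      ∀ v : Vtx F ω k,
        ∃ φ : {w : Vtx F ω k // Edge ω k v w i} → F,
          Function.Bijective φ ∧
          ∀ u w : {w : Vtx F ω k // Edge ω k v w i},
            ∀ s : ℕ, 1 ≤ s → s ≤ k / 2 →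
              (Edge ω k u.1 w.1 s ↔ φ w - φ u ∈ Ski ω k s) :=
  stmt_17_general k F hq ω hω
end

section
/- Let k ≥ 2 be an even integer, q a prime power with q ≡ k+1 (mod 2k), and m ≥ k. If the k-th power Paley digraph G_k(q) contains no transitive subtournament of order m, then R_{k/2}(m+2) ≥ k(q+1)+1; that is, there exists a (k/2)-edge-colored tournament on k(q+1) vertices containing no monochromatic transitive subtournament of order m+2. -/
theorem exists_source {α : Type*} {r : α → α → Prop} {s : Finset α} (hs : s.Nonempty)
    (hirr : ∀ x ∈ s, ¬ r x x) (htot : ∀ x ∈ s, ∀ y ∈ s, x ≠ y → r x y ∨ r y x)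
    (htrans : ∀ x ∈ s, ∀ y ∈ s, ∀ z ∈ s, r x y → r y z → r x z) :
    ∃ u ∈ s, ∀ x ∈ s, x ≠ u → r u x := by
  let r' : s → s → Prop := fun x y => r x y
  have : IsTrans s r' := ⟨fun x y z => htrans x x.2 y y.2 z z.2⟩
  have : Std.Irrefl r' := ⟨fun x => hirr x x.2⟩
  obtain ⟨u, -, hu⟩ := (Finite.wellFounded_of_trans_of_irrefl r').has_min Set.univ
    ⟨⟨_, hs.choose_spec⟩, trivial⟩
  exact ⟨u, u.2, fun x hx hxu => (htot x hx u u.2 hxu).resolve_left (hu ⟨x, hx⟩ trivial)⟩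

def IsTransitiveSubtournament {G : Type*} [AddGroup G] (S T : Set G) : Prop :=
  (∀ a ∈ T, ∀ b ∈ T, a ≠ b → (b - a ∈ S ∨ a - b ∈ S)) ∧
    (∀ a ∈ T, ∀ b ∈ T, ∀ d ∈ T, b - a ∈ S → d - b ∈ S → d - a ∈ S)

theorem exists_isTransitiveSubtournament_of_map {α G : Type*} [AddGroup G] {S : Set G}
    (hS : ∀ x ∈ S, -x ∉ S)
    {r : α → α → Prop} {W : Finset α}
    (htot : ∀ x ∈ W, ∀ y ∈ W, x ≠ y → r x y ∨ r y x)
    (htrans : ∀ x ∈ W, ∀ y ∈ W, ∀ z ∈ W, r x y → r y z → r x z)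
    {p : α → G} (hp : ∀ x ∈ W, ∀ y ∈ W, r x y → p x - p y ∈ S) :
    ∃ T : Set G, T.ncard = W.card ∧ IsTransitiveSubtournament S T := by
  classical
  have hS0 : (0 : G) ∉ S := fun h => hS 0 h (by rwa [neg_zero])
  have hrev : ∀ x ∈ W, ∀ y ∈ W, p y - p x ∈ S → r y x := by
    intro x hx y hy hyx
    have hxy : x ≠ y := by rintro rfl; rw [sub_self] at hyx; exact hS0 hyx
    refine (htot x hx y hy hxy).resolve_left fun h => hS _ (hp x hx y hy h) ?_
    rwa [neg_sub]
  have hinj : Set.InjOn p W := by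
    intro x hx y hy hpxy
    by_contra hxy
    rcases htot x hx y hy hxy with h | h
    · exact hS0 (by simpa [hpxy] using hp x hx y hy h)
    · exact hS0 (by simpa [hpxy] using hp y hy x hx h)
  refine ⟨W.image p, by rw [Set.ncard_coe_finset, Finset.card_image_of_injOn hinj], ?_, ?_⟩
  · simp only [Finset.coe_image, Set.mem_image, Finset.mem_coe]
    rintro _ ⟨x, hx, rfl⟩ _ ⟨y, hy, rfl⟩ hne
    rcases htot x hx y hy (fun h => hne (h ▸ rfl)) with h | h
    · exact Or.inr (hp x hx y hy h)
    · exact Or.inl (hp y hy x hx h)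
  · simp only [Finset.coe_image, Set.mem_image, Finset.mem_coe]
    rintro _ ⟨x, hx, rfl⟩ _ ⟨y, hy, rfl⟩ _ ⟨z, hz, rfl⟩ hyx hzy
    exact hp z hz x hx (htrans z hz y hy x hx (hrev y hy z hz hzy) (hrev x hx y hy hyx))

theorem ZMod.val_add_half_lt_iff {k : ℕ} [NeZero k] (hke : Even k) (d : ZMod k) :
    (d + (k / 2 : ℕ)).val < k / 2 ↔ ¬ d.val < k / 2 := by
  have hk := Nat.even_iff.mp hke
  have := NeZero.ne k
  have hd := ZMod.val_lt d
  rw [ZMod.val_add, ZMod.val_cast_of_lt (by omega)]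
  rcases lt_or_ge d.val (k / 2) with h | h
  · rw [Nat.mod_eq_of_lt (by omega)]; omega
  · rw [Nat.mod_eq_sub_mod (by omega), Nat.mod_eq_of_lt (by omega)]; omega

namespace PaleyBlowup

section Projective

variable {R : Type*} [CommRing R]

def cross (P Q : R × R) : R := P.1 * Q.2 - P.2 * Q.1

def projPoint : Option R → R × R
  | none => (1, 0)
  | some a => (a, 1)

theorem cross_swap (P Q : R × R) : cross Q P = -cross P Q := by
  unfold cross; ring

theorem cross_projPoint_eq_zero_iff [Nontrivial R] {a b : Option R} :
    cross (projPoint a) (projPoint b) = 0 ↔ a = b := by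
  cases a <;> cases b <;> simp [cross, projPoint, sub_eq_zero]

theorem projPoint_ne_zero [Nontrivial R] (a : Option R) : projPoint a ≠ 0 := by
  cases a <;> simp [projPoint, Prod.ext_iff]

theorem exists_cross_ne_zero {P : R × R} (hP : P ≠ 0) : ∃ V, cross V P ≠ 0 := by
  by_cases h : P.2 = 0
  · refine ⟨(0, 1), ?_⟩
    have : P.1 ≠ 0 := fun h1 => hP (Prod.ext h1 h)
    simpa [cross] using this
  · exact ⟨(1, 0), by simpa [cross] using h⟩

end Projective

theorem exists_sub_eq_cross_div {F : Type*} [Field F] {U : F × F} (hU : U ≠ 0) :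
    ∃ f : F × F → F, ∀ P Q, cross U P ≠ 0 → cross U Q ≠ 0 →
      f P - f Q = cross P Q / (cross U P * cross U Q) := by
  obtain ⟨V, hV⟩ := exists_cross_ne_zero hU
  refine ⟨fun P => cross V P / (cross V U * cross U P), fun P Q hP hQ => ?_⟩
  -- the Plücker relation `[VP][UQ] - [VQ][UP] = [VU][PQ]`
  field_simp
  unfold cross
  ring

section Index

variable {F : Type} [Field F] {ω : F} {k : ℕ}

-- The discrete logarithm to base `ω`, reduced mod `k`; junk value `0` off the powers of `ω`.
open Classical in
noncomputable def ind (ω : F) (k : ℕ) (x : F) : ZMod k :=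
  if h : ∃ n : ℕ, x = ω ^ n then (h.choose : ZMod k) else 0

theorem natCast_eq_of_pow_eq (hfin : IsOfFinOrder ω) (hk : k ∣ orderOf ω) {a b : ℕ}
    (h : ω ^ a = ω ^ b) : (a : ZMod k) = b :=
  (ZMod.natCast_eq_natCast_iff _ _ _).mpr ((hfin.pow_eq_pow_iff_modEq.mp h).of_dvd hk)

theorem ind_pow (hfin : IsOfFinOrder ω) (hk : k ∣ orderOf ω) (n : ℕ) : ind ω k (ω ^ n) = n := by
  have h : ∃ m : ℕ, ω ^ n = ω ^ m := ⟨n, rfl⟩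
  rw [ind, dif_pos h]
  exact natCast_eq_of_pow_eq hfin hk h.choose_spec.symm

theorem ind_mul (hgen : ∀ x : F, x ≠ 0 → ∃ n : ℕ, x = ω ^ n) (hfin : IsOfFinOrder ω)
    (hk : k ∣ orderOf ω) {x y : F} (hx : x ≠ 0) (hy : y ≠ 0) :
    ind ω k (x * y) = ind ω k x + ind ω k y := by
  obtain ⟨a, rfl⟩ := hgen x hx
  obtain ⟨b, rfl⟩ := hgen y hy
  rw [← pow_add, ind_pow hfin hk, ind_pow hfin hk, ind_pow hfin hk, Nat.cast_add]

theorem ind_div (hgen : ∀ x : F, x ≠ 0 → ∃ n : ℕ, x = ω ^ n) (hfin : IsOfFinOrder ω)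
    (hk : k ∣ orderOf ω) {x y : F} (hx : x ≠ 0) (hy : y ≠ 0) :
    ind ω k (x / y) = ind ω k x - ind ω k y := by
  rw [eq_sub_iff_add_eq, ← ind_mul hgen hfin hk (div_ne_zero hx hy) hy, div_mul_cancel₀ x hy]

theorem ind_neg (hgen : ∀ x : F, x ≠ 0 → ∃ n : ℕ, x = ω ^ n) (hfin : IsOfFinOrder ω)
    (hk : k ∣ orderOf ω) {x : F} (hx : x ≠ 0) :
    ind ω k (-x) = ind ω k x + ind ω k (-1) := by
  rw [neg_eq_neg_one_mul, ind_mul hgen hfin hk (neg_ne_zero.mpr one_ne_zero) hx, add_comm]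

theorem mem_Sk_iff [NeZero k] (hgen : ∀ x : F, x ≠ 0 → ∃ n : ℕ, x = ω ^ n)
    (hfin : IsOfFinOrder ω) (hk : k ∣ orderOf ω) {x : F} :
    x ∈ Sk ω k ↔ x ≠ 0 ∧ ind ω k x = 0 := by
  constructor
  · rintro ⟨n, rfl⟩
    refine ⟨pow_ne_zero _ hfin.isUnit.ne_zero, ?_⟩
    rw [ind_pow hfin hk, Nat.cast_mul, ZMod.natCast_self, zero_mul]
  · rintro ⟨hx, hind⟩
    obtain ⟨n, rfl⟩ := hgen x hx
    rw [ind_pow hfin hk, ZMod.natCast_eq_zero_iff] at hind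
    obtain ⟨c, rfl⟩ := hind
    exact ⟨c, rfl⟩

theorem ind_neg_one [NeZero k] (hke : Even k) {A : ℕ}
    (hord : orderOf ω = k * (2 * A + 1)) : ind ω k (-1) = (k / 2 : ℕ) := by
  have hfin : IsOfFinOrder ω :=
    orderOf_pos_iff.mp (by rw [hord]; exact mul_pos (NeZero.pos k) (by omega))
  set s := k * A + k / 2
  have h2s : orderOf ω = 2 * s := by
    have := Nat.two_mul_div_two_of_even hke
    rw [hord]; ring_nf; omega
  have hs : 0 < s := by have := NeZero.ne k; have := Nat.even_iff.mp hke; omega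
  have hneg : ω ^ s = -1 := by
    have hsq : ω ^ s * ω ^ s = 1 := by rw [← pow_add, ← two_mul, ← h2s, pow_orderOf_eq_one]
    exact (mul_self_eq_one_iff.mp hsq).resolve_left (pow_ne_one_of_lt_orderOf hs.ne' (by omega))
  rw [← hneg, ind_pow hfin ⟨_, hord⟩]
  simp [s]

end Index

section FiniteField

variable {F : Type} [Field F] [Fintype F] {ω : F}

theorem orderOf_eq_card_sub_one (hgen : ∀ x : F, x ≠ 0 → ∃ n : ℕ, x = ω ^ n)
    (hω0 : ω ≠ 0) : orderOf ω = Fintype.card F - 1 := by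
  have hzp : ∀ x : Fˣ, x ∈ Subgroup.zpowers (Units.mk0 ω hω0) := fun x => by
    obtain ⟨n, hn⟩ := hgen x x.ne_zero
    exact ⟨n, Units.ext (by simp [hn])⟩
  rw [← Units.val_mk0 hω0, orderOf_units, orderOf_eq_card_of_forall_mem_zpowers hzp,
    Nat.card_units, Nat.card_eq_fintype_card]

theorem ne_zero_of_forall_eq_pow (hgen : ∀ x : F, x ≠ 0 → ∃ n : ℕ, x = ω ^ n)
    (hcard : 2 < Fintype.card F) : ω ≠ 0 := by
  classical
  rintro rfl
  have hunit (x : Fˣ) : x = 1 := by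
    obtain ⟨n, hn⟩ := hgen x x.ne_zero
    rcases n with _ | n
    · exact Units.ext (by simpa using hn)
    · exact absurd hn (by simp [x.ne_zero])
  have := Fintype.card_le_one_iff.mpr fun a b => (hunit a).trans (hunit b).symm
  rw [Fintype.card_units] at this
  omega

theorem orderOf_eq_of_card_mod {k : ℕ} [NeZero k]
    (hgen : ∀ x : F, x ≠ 0 → ∃ n : ℕ, x = ω ^ n)
    (hq : Fintype.card F % (2 * k) = k + 1) :
    orderOf ω = k * (2 * (Fintype.card F / (2 * k)) + 1) := by
  have hmod := Nat.mod_lt (Fintype.card F) (show 2 * k > 0 by have := NeZero.ne k; omega)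
  have hle := Nat.mod_le (Fintype.card F) (2 * k)
  rw [hq] at hmod hle
  rw [orderOf_eq_card_sub_one hgen (ne_zero_of_forall_eq_pow hgen (by omega))]
  have := Nat.div_add_mod (Fintype.card F) (2 * k)
  generalize Fintype.card F / (2 * k) = A at this ⊢
  have : k * (2 * A + 1) = 2 * k * A + k := by ring
  omega

end FiniteField

section Blowup

variable {R : Type*} [CommRing R] {k : ℕ} (χ : R → ZMod k)

-- For `u.1 ≠ v.1` and `χ = ind ω k`, this is the index of the determinant of the vectors
-- `ω ^ u.2.val • projPoint u.1` and `ω ^ v.2.val • projPoint v.1`.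
def edgeIndex (u v : Option R × ZMod k) : ZMod k :=
  u.2 + v.2 + χ (cross (projPoint u.1) (projPoint v.1))

-- Within a fiber any tournament would do.
open Classical in
def Adj (u v : Option R × ZMod k) : Prop :=
  if u.1 = v.1 then u.2.val < v.2.val else (edgeIndex χ u v).val < k / 2

open Classical in
noncomputable def color (u v : Option R × ZMod k) : ℕ :=
  if u.1 = v.1 then 1 else (edgeIndex χ u v).val + 1

variable {χ}

theorem edgeIndex_swap [Nontrivial R] (hχ : ∀ x : R, x ≠ 0 → χ (-x) = χ x + (k / 2 : ℕ))
    {u v : Option R × ZMod k} (h : u.1 ≠ v.1) :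
    edgeIndex χ v u = edgeIndex χ u v + (k / 2 : ℕ) := by
  rw [edgeIndex, edgeIndex, cross_swap, hχ _ (cross_projPoint_eq_zero_iff.not.mpr h)]
  ring

theorem eq_of_edgeIndex_left_eq {x y w : Option R × ZMod k} (hxy : x.1 = y.1)
    (h : edgeIndex χ x w = edgeIndex χ y w) : x = y := by
  refine Prod.ext hxy ?_
  rw [edgeIndex, edgeIndex, hxy] at h
  simpa using h

theorem eq_of_edgeIndex_right_eq {x y w : Option R × ZMod k} (hxy : x.1 = y.1)
    (h : edgeIndex χ w x = edgeIndex χ w y) : x = y := by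
  refine Prod.ext hxy ?_
  rw [edgeIndex, edgeIndex, hxy] at h
  simpa using h

theorem not_adj_self (u : Option R × ZMod k) : ¬ Adj χ u u := by
  simp [Adj]

theorem adj_iff_not_adj [Nontrivial R] [NeZero k] (hke : Even k)
    (hχ : ∀ x : R, x ≠ 0 → χ (-x) = χ x + (k / 2 : ℕ)) {u v : Option R × ZMod k} (huv : u ≠ v) :
    Adj χ u v ↔ ¬ Adj χ v u := by
  by_cases h : u.1 = v.1
  · have hval : u.2.val ≠ v.2.val := fun hval => huv (Prod.ext h (ZMod.val_injective _ hval))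
    rw [Adj, Adj, if_pos h, if_pos h.symm]
    omega
  · rw [Adj, Adj, if_neg h, if_neg (Ne.symm h), edgeIndex_swap hχ h,
      ZMod.val_add_half_lt_iff hke, not_not]

theorem adj_or_adj [Nontrivial R] [NeZero k] (hke : Even k)
    (hχ : ∀ x : R, x ≠ 0 → χ (-x) = χ x + (k / 2 : ℕ)) {u v : Option R × ZMod k} (huv : u ≠ v) :
    Adj χ u v ∨ Adj χ v u :=
  or_iff_not_imp_right.mpr (adj_iff_not_adj hke hχ huv).mpr

theorem one_le_color_and_color_le [NeZero k] (hke : Even k) {u v : Option R × ZMod k}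
    (h : Adj χ u v) :
    1 ≤ color χ u v ∧ color χ u v ≤ k / 2 := by
  have := Nat.even_iff.mp hke
  have := NeZero.ne k
  by_cases hp : u.1 = v.1
  · rw [color, if_pos hp]; omega
  · rw [Adj, if_neg hp] at h
    rw [color, if_neg hp]; omega

theorem edgeIndex_eq_of_color_eq [NeZero k] {u v : Option R × ZMod k} (h : u.1 ≠ v.1) {col : ℕ}
    (hcol : color χ u v = col) : edgeIndex χ u v = ((col - 1 : ℕ) : ZMod k) := by
  rw [color, if_neg h] at hcol
  rw [← hcol, Nat.add_sub_cancel, ZMod.natCast_zmod_val]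

theorem card_filter_fst_le_two [Nontrivial R] [NeZero k] [DecidableEq R] (hke : Even k)
    (hχ : ∀ x : R, x ≠ 0 → χ (-x) = χ x + (k / 2 : ℕ))
    {s : Finset (Option R × ZMod k)} {c : ZMod k}
    (hc : ∀ x ∈ s, ∀ y ∈ s, x.1 ≠ y.1 → Adj χ x y → edgeIndex χ x y = c)
    {w : Option R × ZMod k} (hw : w ∈ s) {a : Option R} (ha : a ≠ w.1) :
    (s.filter (·.1 = a)).card ≤ 2 := by
  classical
  set t := s.filter (·.1 = a)
  have hmem {x} (hx : x ∈ t) : x ∈ s ∧ x.1 ≠ w.1 := by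
    rw [Finset.mem_filter] at hx
    exact ⟨hx.1, hx.2 ▸ ha⟩
  have hsplit : t ⊆ t.filter (Adj χ · w) ∪ t.filter (Adj χ w ·) := by
    intro x hx
    have hxw : x ≠ w := fun h => (hmem hx).2 (h ▸ rfl)
    simpa [Finset.mem_union, Finset.mem_filter, hx] using adj_or_adj hke hχ hxw
  have hfib {x y} (hx : x ∈ t) (hy : y ∈ t) : x.1 = y.1 := by
    rw [(Finset.mem_filter.mp hx).2, (Finset.mem_filter.mp hy).2]
  have hin : (t.filter (Adj χ · w)).card ≤ 1 := by
    refine Finset.card_le_one.mpr fun x hx y hy => ?_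
    rw [Finset.mem_filter] at hx hy
    refine eq_of_edgeIndex_left_eq (χ := χ) (w := w) (hfib hx.1 hy.1) ?_
    rw [hc x (hmem hx.1).1 w hw (hmem hx.1).2 hx.2, hc y (hmem hy.1).1 w hw (hmem hy.1).2 hy.2]
  have hout : (t.filter (Adj χ w ·)).card ≤ 1 := by
    refine Finset.card_le_one.mpr fun x hx y hy => ?_
    rw [Finset.mem_filter] at hx hy
    refine eq_of_edgeIndex_right_eq (χ := χ) (w := w) (hfib hx.1 hy.1) ?_
    rw [hc w hw x (hmem hx.1).1 (hmem hx.1).2.symm hx.2,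
      hc w hw y (hmem hy.1).1 (hmem hy.1).2.symm hy.2]
  calc t.card ≤ _ := Finset.card_le_card hsplit
    _ ≤ _ := Finset.card_union_le _ _
    _ ≤ 2 := by omega

theorem card_le_card_filter_fst_ne_add_two [Nontrivial R] [NeZero k] [DecidableEq R]
    (hke : Even k) (hχ : ∀ x : R, x ≠ 0 → χ (-x) = χ x + (k / 2 : ℕ))
    {s : Finset (Option R × ZMod k)} {c : ZMod k}
    (hc : ∀ x ∈ s, ∀ y ∈ s, x.1 ≠ y.1 → Adj χ x y → edgeIndex χ x y = c)
    (hs : k < s.card) (a : Option R) :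
    s.card ≤ (s.filter (·.1 ≠ a)).card + 2 := by
  obtain ⟨w, hw⟩ : (s.filter (·.1 ≠ a)).Nonempty := by
    by_contra! hempty
    have hfib : ∀ x ∈ s, x.1 = a := by simpa [Finset.filter_eq_empty_iff] using hempty
    have hinj : Set.InjOn Prod.snd (s : Set (Option R × ZMod k)) := fun x hx y hy h =>
      Prod.ext ((hfib x hx).trans (hfib y hy).symm) h
    have := (Finset.card_image_of_injOn hinj).symm.trans_le
      ((Finset.card_le_univ _).trans (ZMod.card k).le)
    omega
  have hw' := Finset.mem_filter.mp hw
  have := card_filter_fst_le_two hke hχ hc hw'.1 (Ne.symm hw'.2)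
  have := Finset.card_filter_add_card_filter_not (s := s) (·.1 = a)
  simp only [ne_eq] at this ⊢
  omega

end Blowup

section Paley

variable {F : Type} [Field F] {ω : F} {k : ℕ} [NeZero k]

theorem neg_notMem_Sk (hke : Even k) (hgen : ∀ x : F, x ≠ 0 → ∃ n : ℕ, x = ω ^ n)
    (hfin : IsOfFinOrder ω) (hk : k ∣ orderOf ω)
    (hneg : ∀ x : F, x ≠ 0 → ind ω k (-x) = ind ω k x + (k / 2 : ℕ)) {x : F}
    (hx : x ∈ Sk ω k) : -x ∉ Sk ω k := by
  rw [mem_Sk_iff hgen hfin hk] at hx ⊢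
  rw [hneg x hx.1, hx.2, zero_add]
  have := Nat.even_iff.mp hke
  have := NeZero.ne k
  have hval : ((k / 2 : ℕ) : ZMod k).val ≠ 0 := by rw [ZMod.val_cast_of_lt (by omega)]; omega
  exact fun h => hval (by rw [h.2, ZMod.val_zero])

theorem exists_sub_mem_Sk (hgen : ∀ x : F, x ≠ 0 → ∃ n : ℕ, x = ω ^ n)
    (hfin : IsOfFinOrder ω) (hk : k ∣ orderOf ω) (u : Option F × ZMod k) (c : ZMod k) :
    ∃ p : Option F × ZMod k → F, ∀ x y, u.1 ≠ x.1 → u.1 ≠ y.1 → x.1 ≠ y.1 →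
      edgeIndex (ind ω k) u x = c → edgeIndex (ind ω k) u y = c →
      edgeIndex (ind ω k) x y = c → p x - p y ∈ Sk ω k := by
  obtain ⟨f, hf⟩ := exists_sub_eq_cross_div (projPoint_ne_zero u.1)
  refine ⟨fun x => ω ^ (c - 2 * u.2).val * f (projPoint x.1),
    fun x y hux huy hxy hcx hcy hcxy => ?_⟩
  have hne {a b : Option F} (h : a ≠ b) : cross (projPoint a) (projPoint b) ≠ 0 :=
    cross_projPoint_eq_zero_iff.not.mpr h
  have hpow : ω ^ (c - 2 * u.2).val ≠ 0 := pow_ne_zero _ hfin.isUnit.ne_zero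
  have hden := mul_ne_zero (hne hux) (hne huy)
  rw [← mul_sub, hf _ _ (hne hux) (hne huy), mem_Sk_iff hgen hfin hk]
  refine ⟨mul_ne_zero hpow (div_ne_zero (hne hxy) hden), ?_⟩
  rw [ind_mul hgen hfin hk hpow (div_ne_zero (hne hxy) hden), ind_pow hfin hk,
    ZMod.natCast_zmod_val, ind_div hgen hfin hk (hne hxy) hden,
    ind_mul hgen hfin hk (hne hux) (hne huy)]
  rw [edgeIndex] at hcx hcy hcxy
  linear_combination hcxy - hcx - hcy

theorem exists_isTransitiveSubtournament_Sk (hke : Even k)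
    (hgen : ∀ x : F, x ≠ 0 → ∃ n : ℕ, x = ω ^ n) (hfin : IsOfFinOrder ω) (hk : k ∣ orderOf ω)
    (hneg : ∀ x : F, x ≠ 0 → ind ω k (-x) = ind ω k x + (k / 2 : ℕ))
    {u : Option F × ZMod k} {c : ZMod k} {W : Finset (Option F × ZMod k)}
    (hu : ∀ x ∈ W, u.1 ≠ x.1 ∧ edgeIndex (ind ω k) u x = c)
    (hfib : ∀ x ∈ W, ∀ y ∈ W, x.1 = y.1 → x = y)
    (hc : ∀ x ∈ W, ∀ y ∈ W, x.1 ≠ y.1 → Adj (ind ω k) x y → edgeIndex (ind ω k) x y = c)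
    (htrans : ∀ x ∈ W, ∀ y ∈ W, ∀ z ∈ W,
      Adj (ind ω k) x y → Adj (ind ω k) y z → Adj (ind ω k) x z) :
    ∃ T : Set F, T.ncard = W.card ∧ IsTransitiveSubtournament (Sk ω k) T := by
  obtain ⟨p, hp⟩ := exists_sub_mem_Sk hgen hfin hk u c
  refine exists_isTransitiveSubtournament_of_map (fun _ => neg_notMem_Sk hke hgen hfin hk hneg)
    (fun x _ y _ hxy => adj_or_adj hke hneg hxy) htrans (p := p) fun x hx y hy hxy => ?_
  have hne : x.1 ≠ y.1 := fun h => not_adj_self (χ := ind ω k) y (hfib x hx y hy h ▸ hxy)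
  exact hp x y (hu x hx).1 (hu y hy).1 hne (hu x hx).2 (hu y hy).2 (hc x hx y hy hne hxy)

theorem card_le_of_monochromatic_transitive (hke : Even k)
    (hgen : ∀ x : F, x ≠ 0 → ∃ n : ℕ, x = ω ^ n) (hfin : IsOfFinOrder ω) (hk : k ∣ orderOf ω)
    (hneg : ∀ x : F, x ≠ 0 → ind ω k (-x) = ind ω k x + (k / 2 : ℕ)) {m : ℕ} (hm : k ≤ m)
    (hG : ¬ ∃ T : Set F, T.ncard = m ∧ IsTransitiveSubtournament (Sk ω k) T)
    {s : Finset (Option F × ZMod k)} {col : ℕ}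
    (hmono : ∀ a ∈ s, ∀ b ∈ s, Adj (ind ω k) a b → color (ind ω k) a b = col)
    (htrans : ∀ a ∈ s, ∀ b ∈ s, ∀ d ∈ s,
      Adj (ind ω k) a b → Adj (ind ω k) b d → Adj (ind ω k) a d) :
    s.card ≤ m + 1 := by
  classical
  by_contra! hs
  obtain ⟨u, hus, hsrc⟩ := exists_source (s.card_pos.mp (by omega))
    (fun x _ => not_adj_self x) (fun x _ y _ hxy => adj_or_adj hke hneg hxy) htrans
  have hc (x) (hx : x ∈ s) (y) (hy : y ∈ s) (hxy : x.1 ≠ y.1) (h : Adj (ind ω k) x y) :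
      edgeIndex (ind ω k) x y = ((col - 1 : ℕ) : ZMod k) :=
    edgeIndex_eq_of_color_eq hxy (hmono x hx y hy h)
  have hW : m ≤ (s.filter (·.1 ≠ u.1)).card := by
    have := card_le_card_filter_fst_ne_add_two hke hneg hc (by omega) u.1
    omega
  have hu (x) (hx : x ∈ s.filter (·.1 ≠ u.1)) :
      u.1 ≠ x.1 ∧ edgeIndex (ind ω k) u x = ((col - 1 : ℕ) : ZMod k) := by
    obtain ⟨hxs, hxu⟩ := Finset.mem_filter.mp hx
    exact ⟨Ne.symm hxu, hc u hus x hxs (Ne.symm hxu) (hsrc x hxs fun h => hxu (h ▸ rfl))⟩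
  obtain ⟨W', hW', hW'card⟩ := Finset.exists_subset_card_eq hW
  have hW's {x} (hx : x ∈ W') : x ∈ s := (Finset.mem_filter.mp (hW' hx)).1
  obtain ⟨T, hT, hTt⟩ := exists_isTransitiveSubtournament_Sk hke hgen hfin hk hneg (W := W')
    (fun x hx => hu x (hW' hx))
    (fun x hx y hy h =>
      eq_of_edgeIndex_right_eq h ((hu x (hW' hx)).2.trans (hu y (hW' hy)).2.symm))
    (fun x hx y hy => hc x (hW's hx) y (hW's hy))
    (fun x hx y hy z hz => htrans x (hW's hx) y (hW's hy) z (hW's hz))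
  exact hG ⟨T, hT.trans hW'card, hTt⟩

end Paley

end PaleyBlowup

open PaleyBlowup in
/-- Corollary: let `k ≥ 2` be even, `q = |F|` a prime power with
`q ≡ k + 1 (mod 2k)`, and `m ≥ k`.  If the `k`-th power Paley digraph `G_k(q)`
(vertex set `F`, edge `a → b` iff `b - a ∈ S_k`) contains no transitive
subtournament of order `m`, then `R_{k/2}(m + 2) ≥ k(q + 1) + 1`: there is a
`(k/2)`-edge-colored tournament on `k(q + 1)` vertices with no monochromatic
transitive subtournament of order `m + 2`. -/
theorem stmt_19 (k : ℕ) (hk2 : 2 ≤ k) (hke : Even k)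
    (F : Type) [Field F] [Fintype F]
    (hq : Fintype.card F % (2 * k) = k + 1)
    (ω : F) (hω : ∀ x : F, x ≠ 0 → ∃ n : ℕ, x = ω ^ n)
    (m : ℕ) (hm : k ≤ m)
    (hG : ¬ ∃ T : Set F, T.ncard = m ∧
      (∀ a ∈ T, ∀ b ∈ T, a ≠ b → (b - a ∈ Sk ω k ∨ a - b ∈ Sk ω k)) ∧
      (∀ a ∈ T, ∀ b ∈ T, ∀ d ∈ T,
        b - a ∈ Sk ω k → d - b ∈ Sk ω k → d - a ∈ Sk ω k)) :
    ∃ (r : Fin (k * (Fintype.card F + 1)) → Fin (k * (Fintype.card F + 1)) → Prop)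
      (c : Fin (k * (Fintype.card F + 1)) → Fin (k * (Fintype.card F + 1)) → ℕ),
      (∀ v, ¬ r v v) ∧
      (∀ u v, u ≠ v → (r u v ↔ ¬ r v u)) ∧
      (∀ u v, r u v → 1 ≤ c u v ∧ c u v ≤ k / 2) ∧
      ¬ ∃ (s : Finset (Fin (k * (Fintype.card F + 1)))) (col : ℕ),
          s.card = m + 2 ∧
          (∀ a ∈ s, ∀ b ∈ s, r a b → c a b = col) ∧
          (∀ a ∈ s, ∀ b ∈ s, ∀ d ∈ s, r a b → r b d → r a d) := by
  have : NeZero k := ⟨by omega⟩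
  have hord := orderOf_eq_of_card_mod hω hq
  have hfin : IsOfFinOrder ω := orderOf_pos_iff.mp (by rw [hord]; positivity)
  have hχ (x : F) (hx : x ≠ 0) : ind ω k (-x) = ind ω k x + (k / 2 : ℕ) :=
    (ind_neg hω hfin ⟨_, hord⟩ hx).trans (congrArg _ (ind_neg_one hke hord))
  let e : Fin (k * (Fintype.card F + 1)) ≃ Option F × ZMod k :=
    Fintype.equivOfCardEq (by simp [mul_comm])
  refine ⟨fun x y => Adj (ind ω k) (e x) (e y), fun x y => color (ind ω k) (e x) (e y),
    fun v => not_adj_self _, fun u v huv => adj_iff_not_adj hke hχ (e.injective.ne huv),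
    fun u v h => one_le_color_and_color_le hke h, ?_⟩
  rintro ⟨s, col, hcard, hmono, htrans⟩
  have := card_le_of_monochromatic_transitive hke hω hfin ⟨_, hord⟩ hχ hm hG
    (s := s.map e.toEmbedding) (col := col)
    (by simpa only [Finset.forall_mem_map, Equiv.coe_toEmbedding] using hmono)
    (by simpa only [Finset.forall_mem_map, Equiv.coe_toEmbedding] using htrans)
  rw [Finset.card_map] at this
  omega
end
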